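/- arXiv:1902.03706 — 11 statements merged into one kernel-verified Lean document; each statement's English description precedes it below -/
import Mathlib

section
/- If f : 2^V → ℝ is a submodular function on a finite ground set V with f(∅) = 0, then the base polyhedron B(f) = {x ∈ ℝ^V : x(X) ≤ f(X) for all X ⊆ V, and x(V) = f(V)} is nonempty. -/
/-! Greedy algorithm: add the elements one at a time, giving each new element `a` its marginal
value `f(T ∪ {a}) - f(T)` over the set `T` of elements already added. Then `x(T) = f(T)` by
telescoping, and for `X ⊆ T ∪ {a}` containing `a`, submodularity applied to `X` and `T` gives
`f(X \ {a}) + f(T ∪ {a}) - f(T) ≤ f(X)`, so the constraints survive each step. -/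

open Finset

section

variable {V : Type*}

/-- A point of the base polyhedron of `f` restricted to the subsets of `T`. -/
def IsBaseOn (f : Finset V → ℝ) (T : Finset V) (x : V → ℝ) : Prop :=
  (∀ X ⊆ T, ∑ i ∈ X, x i ≤ f X) ∧ ∑ i ∈ T, x i = f T

theorem isBaseOn_empty {f : Finset V → ℝ} (h0 : f ∅ = 0) : IsBaseOn f ∅ 0 := by
  refine ⟨fun X hX => ?_, by simp [h0]⟩
  simp [subset_empty.mp hX, h0]

theorem IsBaseOn.update_insert [DecidableEq V] {f : Finset V → ℝ}
    (hsub : ∀ X Y : Finset V, f (X ∪ Y) + f (X ∩ Y) ≤ f X + f Y)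
    {T : Finset V} {a : V} (ha : a ∉ T) {x : V → ℝ} (hx : IsBaseOn f T x) :
    IsBaseOn f (insert a T) (Function.update x a (f (insert a T) - f T)) := by
  obtain ⟨hle, heq⟩ := hx
  set y := Function.update x a (f (insert a T) - f T)
  have hy_off : ∀ X : Finset V, a ∉ X → ∑ i ∈ X, y i = ∑ i ∈ X, x i := fun X haX =>
    sum_congr rfl fun i hi => Function.update_of_ne (ne_of_mem_of_not_mem hi haX) _ _
  have hy_insert : ∀ X : Finset V, a ∉ X →
      ∑ i ∈ insert a X, y i = ∑ i ∈ X, x i + (f (insert a T) - f T) := fun X haX => by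
    rw [sum_insert haX, hy_off X haX, add_comm]
    exact congrArg _ (Function.update_self a _ x)
  refine ⟨fun X hX => ?_, by rw [hy_insert T ha, heq]; ring⟩
  by_cases haX : a ∈ X
  · set Y := X.erase a
    have hYT : Y ⊆ T := fun i hi =>
      (mem_insert.mp (hX (mem_of_mem_erase hi))).resolve_left (ne_of_mem_erase hi)
    have hunion : insert a Y ∪ T = insert a T := by
      rw [insert_union, union_eq_right.mpr hYT]
    have hinter : insert a Y ∩ T = Y := by
      rw [insert_inter_of_notMem ha, inter_eq_left.mpr hYT]
    have hsm := hsub (insert a Y) T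
    rw [hunion, hinter] at hsm
    rw [← insert_erase haX, hy_insert Y (notMem_erase a X)]
    linarith [hle Y hYT]
  · rw [hy_off X haX]
    exact hle X fun i hi => (mem_insert.mp (hX hi)).resolve_left (ne_of_mem_of_not_mem hi haX)

theorem exists_isBaseOn [DecidableEq V] {f : Finset V → ℝ} (h0 : f ∅ = 0)
    (hsub : ∀ X Y : Finset V, f (X ∪ Y) + f (X ∩ Y) ≤ f X + f Y) (T : Finset V) :
    ∃ x, IsBaseOn f T x := by
  induction T using Finset.induction_on with
  | empty => exact ⟨0, isBaseOn_empty h0⟩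
  | insert a T ha ih =>
    obtain ⟨x, hx⟩ := ih
    exact ⟨_, hx.update_insert hsub ha⟩

end

theorem base_polyhedron_nonempty_general {V : Type*} [Fintype V] [DecidableEq V]
    (f : Finset V → ℝ) (h0 : f ∅ = 0)
    (hsub : ∀ X Y : Finset V, f (X ∪ Y) + f (X ∩ Y) ≤ f X + f Y) :
    ∃ x : V → ℝ,
      (∀ X : Finset V, ∑ i ∈ X, x i ≤ f X) ∧ ∑ i, x i = f Finset.univ := by
  obtain ⟨x, hle, heq⟩ := exists_isBaseOn h0 hsub univ
  exact ⟨x, fun X => hle X (subset_univ X), heq⟩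

theorem base_polyhedron_nonempty {V : Type*} [Fintype V] [DecidableEq V] [Nonempty V]
    (f : Finset V → ℝ) (h0 : f ∅ = 0)
    (hsub : ∀ X Y : Finset V, f (X ∪ Y) + f (X ∩ Y) ≤ f X + f Y) :
    ∃ x : V → ℝ,
      (∀ X : Finset V, ∑ i ∈ X, x i ≤ f X) ∧ ∑ i, x i = f Finset.univ :=
  base_polyhedron_nonempty_general f h0 hsub
end

section
/- Let f : 2^V → ℝ be submodular with f(∅) = 0 and let φ = (φ_1,…,φ_n) be a permutation of the finite set V. Define x ∈ ℝ^V by x_{φ_i} = f({φ_1,…,φ_i}) − f({φ_1,…,φ_{i−1}}). Then x lies in the base polyhedron B(f), i.e., x(X) ≤ f(X) for all X ⊆ V and x(V) = f(V). -/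
/-!
Rank `V` by an injective `r` (here `φ.symm`) and peel off the top-ranked element `a` of
`X = insert a s`. The prefix `P = {u | r u < r a}` satisfies `X ∪ P = {u | r u ≤ r a}` and
`X ∩ P = s`, so submodularity bounds the marginal value of `a` by `f X - f s`, and induction gives
`x(X) ≤ f(X) - f(∅)`. When `X` is closed downwards, `X ∪ P = X` and `P = s`, the bound is an
equality, and on `V` the sum telescopes.
-/

/-- The greedy vector of a permutation `φ` of `V` (listing `V` as `φ 0, φ 1, …`):
user `v` is assigned the marginal value of `f` when `v` joins the set of users
preceding it in the order `φ`. -/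
noncomputable def greedyVector {V : Type*} [Fintype V] [DecidableEq V]
    (f : Finset V → ℝ) (φ : Fin (Fintype.card V) ≃ V) (v : V) : ℝ :=
  f (Finset.univ.filter fun u => φ.symm u ≤ φ.symm v) -
    f (Finset.univ.filter fun u => φ.symm u < φ.symm v)

open Finset Function

def IsSubmodular {V G : Type*} [DecidableEq V] [AddCommGroup G] [PartialOrder G]
    (f : Finset V → G) : Prop :=
  ∀ X Y : Finset V, f (X ∪ Y) + f (X ∩ Y) ≤ f X + f Y

def rankMarginal {V α G : Type*} [Fintype V] [LinearOrder α] [AddCommGroup G]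
    (f : Finset V → G) (r : V → α) (v : V) : G :=
  f {u | r u ≤ r v} - f {u | r u < r v}

section Greedy

variable {V α G : Type*} [Fintype V] [DecidableEq V] [LinearOrder α]
  {r : V → α} {a : V} {s : Finset V}

theorem insert_union_filter_lt_eq_filter_le (hr : Injective r) (hmax : ∀ x ∈ s, r x ≤ r a) :
    insert a s ∪ ({u | r u < r a} : Finset V) = ({u | r u ≤ r a} : Finset V) := by
  ext u
  simp only [mem_union, mem_insert, mem_filter, mem_univ, true_and]
  constructor
  · rintro ((rfl | hu) | hlt)
    exacts [le_rfl, hmax u hu, hlt.le]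
  · intro hle
    rcases hle.lt_or_eq with hlt | heq
    exacts [Or.inr hlt, Or.inl (Or.inl (hr heq))]

theorem insert_inter_filter_lt_eq (hr : Injective r) (ha : a ∉ s) (hmax : ∀ x ∈ s, r x ≤ r a) :
    insert a s ∩ ({u | r u < r a} : Finset V) = s := by
  ext u
  simp only [mem_inter, mem_insert, mem_filter, mem_univ, true_and]
  constructor
  · rintro ⟨rfl | hu, hlt⟩
    exacts [absurd hlt (lt_irrefl _), hu]
  · intro hu
    refine ⟨Or.inr hu, (hmax u hu).lt_of_ne fun h => ha ?_⟩
    rwa [← hr h]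

variable [AddCommGroup G] {f : Finset V → G}

theorem sum_rankMarginal_of_downwardClosed (hr : Injective r)
    (hs : ∀ u ∈ s, ∀ w, r w < r u → w ∈ s) :
    ∑ v ∈ s, rankMarginal f r v = f s - f ∅ := by
  induction s using Finset.induction_on_max_value r with
  | empty => rw [sum_empty, sub_self]
  | insert a s ha hmax ih =>
    have hprefix : ({u | r u < r a} : Finset V) ⊆ insert a s := fun w hw =>
      hs a (mem_insert_self a s) w (mem_filter.1 hw).2
    have hs' : ∀ u ∈ s, ∀ w, r w < r u → w ∈ s := fun u hu w hw =>
      (mem_insert.1 (hs u (mem_insert_of_mem hu) w hw)).resolve_left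
        fun h => (hw.trans_le (hmax u hu)).ne (congrArg r h)
    have hunion := insert_union_filter_lt_eq_filter_le hr hmax
    have hinter := insert_inter_filter_lt_eq hr ha hmax
    rw [union_eq_left.2 hprefix] at hunion
    rw [inter_eq_right.2 hprefix] at hinter
    rw [sum_insert ha, ih hs', rankMarginal, ← hunion, hinter]
    abel

variable [PartialOrder G] [IsOrderedAddMonoid G]

theorem rankMarginal_add_le (hf : IsSubmodular f) (hr : Injective r) (ha : a ∉ s)
    (hmax : ∀ x ∈ s, r x ≤ r a) : rankMarginal f r a + f s ≤ f (insert a s) := by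
  have key := hf (insert a s) {u | r u < r a}
  rw [insert_union_filter_lt_eq_filter_le hr hmax, insert_inter_filter_lt_eq hr ha hmax] at key
  rwa [rankMarginal, sub_add_eq_add_sub, sub_le_iff_le_add]

theorem sum_rankMarginal_le (hf : IsSubmodular f) (hr : Injective r) (X : Finset V) :
    ∑ v ∈ X, rankMarginal f r v ≤ f X - f ∅ := by
  induction X using Finset.induction_on_max_value r with
  | empty => rw [sum_empty, sub_self]
  | insert a s ha hmax ih =>
    calc ∑ v ∈ insert a s, rankMarginal f r v = rankMarginal f r a + ∑ v ∈ s, rankMarginal f r v :=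
          sum_insert ha
      _ ≤ rankMarginal f r a + (f s - f ∅) := by gcongr
      _ ≤ f (insert a s) - f ∅ := by
          rw [← add_sub_assoc]
          exact sub_le_sub_right (rankMarginal_add_le hf hr ha hmax) _

theorem greedyVector_eq_rankMarginal (f : Finset V → ℝ) (φ : Fin (Fintype.card V) ≃ V) :
    greedyVector f φ = rankMarginal f φ.symm :=
  rfl

end Greedy

/-- Correctness of the Edmonds greedy algorithm: the greedy vector of any
permutation lies in the base polyhedron `B(f)` of a submodular `f` with `f ∅ = 0`. -/
theorem greedy_mem_base_polyhedron {V : Type*} [Fintype V] [DecidableEq V]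
    (f : Finset V → ℝ) (h0 : f ∅ = 0)
    (hsub : ∀ X Y : Finset V, f (X ∪ Y) + f (X ∩ Y) ≤ f X + f Y)
    (φ : Fin (Fintype.card V) ≃ V) :
    (∀ X : Finset V, ∑ i ∈ X, greedyVector f φ i ≤ f X) ∧
      ∑ i, greedyVector f φ i = f Finset.univ := by
  have hr : Injective φ.symm := φ.symm.injective
  rw [greedyVector_eq_rankMarginal]
  constructor
  · intro X
    simpa [h0] using sum_rankMarginal_le hsub hr X
  · simpa [h0] using
      sum_rankMarginal_of_downwardClosed (f := f) (s := univ) hr fun _ _ w _ => mem_univ w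
end

section
/- Let f : 2^V → ℝ be submodular with f(∅) = 0. For each i ∈ V, the Shapley value coordinate r_i = ∑_{X ⊆ V∖{i}} (|X|! (|V|−|X|−1)! / |V|!) (f(X ∪ {i}) − f(X)) equals the average over all permutations φ of V of the greedy marginal f(V_i^φ) − f(V_{i−1}^φ), where V_k^φ = {φ_1,…,φ_k} and i = φ_{k} for the appropriate k. Consequently, the Shapley value vector lies in the base polyhedron B(f). -/
/-- The Shapley value coordinate of player `i` for the game `(V, f)`. -/
noncomputable def shapley {V : Type*} [Fintype V] [DecidableEq V]
    (f : Finset V → ℝ) (i : V) : ℝ :=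
  ∑ X ∈ (Finset.univ.erase i).powerset,
    ((X.card.factorial * (Fintype.card V - X.card - 1).factorial : ℝ) /
        (Fintype.card V).factorial) * (f (insert i X) - f X)

/-- The greedy marginal of player `i` under the permutation `φ`. -/
noncomputable def greedyMarginal {V : Type*} [Fintype V] [DecidableEq V]
    (f : Finset V → ℝ) (φ : Fin (Fintype.card V) ≃ V) (i : V) : ℝ :=
  f (Finset.univ.filter fun u => φ.symm u ≤ φ.symm i) -
    f (Finset.univ.filter fun u => φ.symm u < φ.symm i)

open Finset
set_option linter.unusedSectionVars false
set_option maxHeartbeats 1000000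

section Helpers
variable {V : Type*} [Fintype V] [DecidableEq V]


def pref (φ : Fin (Fintype.card V) ≃ V) (m : ℕ) : Finset V :=
  univ.filter (fun u => (φ.symm u : ℕ) < m)

lemma pref_zero (φ : Fin (Fintype.card V) ≃ V) : pref φ 0 = ∅ := by
  simp [pref]

lemma pref_top (φ : Fin (Fintype.card V) ≃ V) : pref φ (Fintype.card V) = univ := by
  simp [pref, Fin.isLt]

lemma pref_succ (φ : Fin (Fintype.card V) ≃ V) (m : Fin (Fintype.card V)) :
    pref φ ((m : ℕ) + 1) = insert (φ m) (pref φ m) := by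
  ext u
  simp only [pref, mem_filter, mem_univ, true_and, mem_insert, Nat.lt_succ_iff_lt_or_eq]
  constructor
  · rintro (h | h)
    · exact Or.inr h
    · left; have : φ.symm u = m := Fin.ext h
      simpa using congrArg φ this
  · rintro (h | h)
    · right; subst h; simp
    · exact Or.inl h

lemma filter_le_eq (φ : Fin (Fintype.card V) ≃ V) (i : V) :
    (univ.filter fun u => φ.symm u ≤ φ.symm i) = pref φ ((φ.symm i : ℕ) + 1) := by
  ext u
  simp only [pref, mem_filter, mem_univ, true_and, Fin.le_def, Fin.lt_def]
  omega

lemma filter_lt_eq' (φ : Fin (Fintype.card V) ≃ V) (i : V) :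
    (univ.filter fun u => φ.symm u < φ.symm i) = pref φ ((φ.symm i : ℕ)) := by
  ext u
  simp only [pref, mem_filter, mem_univ, true_and, Fin.lt_def]

lemma greedy_telescope (f : Finset V → ℝ) (h0 : f ∅ = 0)
    (φ : Fin (Fintype.card V) ≃ V) :
    ∑ i, greedyMarginal f φ i = f univ := by
  rw [← Equiv.sum_comp φ (fun i => greedyMarginal f φ i)]
  have h : ∀ k : Fin (Fintype.card V), greedyMarginal f φ (φ k)
      = f (pref φ ((k:ℕ)+1)) - f (pref φ (k:ℕ)) := by
    intro k
    rw [greedyMarginal, filter_le_eq, filter_lt_eq']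
    simp
  rw [Finset.sum_congr rfl (fun k _ => h k), Finset.sum_fin_eq_sum_range]
  have : ∀ j ∈ Finset.range (Fintype.card V),
      (if hj : j < Fintype.card V then f (pref φ ((⟨j,hj⟩ : Fin _) + 1)) - f (pref φ (⟨j,hj⟩ : Fin _))
       else 0) = f (pref φ (j+1)) - f (pref φ j) := by
    intro j hj
    rw [dif_pos (Finset.mem_range.mp hj)]
  rw [Finset.sum_congr rfl this, Finset.sum_range_sub (fun j => f (pref φ j)),
    pref_zero, pref_top, h0, sub_zero]

lemma gm_eq (f : Finset V → ℝ) (φ : Fin (Fintype.card V) ≃ V) (k : Fin (Fintype.card V)) :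
    greedyMarginal f φ (φ k) = f (pref φ ((k:ℕ)+1)) - f (pref φ (k:ℕ)) := by
  rw [greedyMarginal, filter_le_eq, filter_lt_eq']
  simp

lemma pref_stable (φ : Fin (Fintype.card V) ≃ V) (m : ℕ) (hm : Fintype.card V ≤ m) :
    pref φ m = univ := by
  ext u; simp only [pref, mem_filter, mem_univ, true_and, iff_true]
  exact lt_of_lt_of_le (Fin.isLt _) hm

lemma greedy_le (f : Finset V → ℝ) (h0 : f ∅ = 0)
    (hsub : ∀ X Y : Finset V, f (X ∪ Y) + f (X ∩ Y) ≤ f X + f Y)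
    (φ : Fin (Fintype.card V) ≃ V) (X : Finset V) :
    ∑ i ∈ X, greedyMarginal f φ i ≤ f X := by
  have key : ∀ m : ℕ, ∑ i ∈ X ∩ pref φ m, greedyMarginal f φ i ≤ f (X ∩ pref φ m) := by
    intro m
    induction m with
    | zero => simp [pref_zero, h0]
    | succ m ih =>
      by_cases hm : m < Fintype.card V
      · set k : Fin (Fintype.card V) := ⟨m, hm⟩ with hk
        have hps : pref φ (m+1) = insert (φ k) (pref φ m) := by
          have := pref_succ φ k; simpa using this
        have hknot : φ k ∉ pref φ m := by simp [pref, hk]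
        by_cases hiX : φ k ∈ X
        · have hXeq : X ∩ pref φ (m+1) = insert (φ k) (X ∩ pref φ m) := by
            rw [hps]
            ext u; simp only [mem_inter, mem_insert]
            constructor
            · rintro ⟨h1, h2 | h2⟩
              exacts [Or.inl h2, Or.inr ⟨h1, h2⟩]
            · rintro (h | ⟨h1, h2⟩)
              exacts [⟨h ▸ hiX, Or.inl h⟩, ⟨h1, Or.inr h2⟩]
          have hnot : φ k ∉ X ∩ pref φ m := fun h => hknot (Finset.mem_of_mem_inter_right h)
          rw [hXeq, Finset.sum_insert hnot]
          have hgm : greedyMarginal f φ (φ k) = f (pref φ (m+1)) - f (pref φ m) := gm_eq f φ k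
          have hsub' := hsub (pref φ m) (insert (φ k) (X ∩ pref φ m))
          have hu : pref φ m ∪ insert (φ k) (X ∩ pref φ m) = pref φ (m+1) := by
            rw [hps]
            ext u; simp only [mem_union, mem_insert, mem_inter]
            tauto
          have hi : pref φ m ∩ insert (φ k) (X ∩ pref φ m) = X ∩ pref φ m := by
            ext u; simp only [mem_inter, mem_insert]
            constructor
            · rintro ⟨h1, (h2 | h2)⟩
              · exact absurd (h2 ▸ h1) hknot
              · exact h2
            · intro h; exact ⟨h.2, Or.inr h⟩
          rw [hu, hi] at hsub'
          have : greedyMarginal f φ (φ k) + ∑ i ∈ X ∩ pref φ m, greedyMarginal f φ i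
              ≤ (f (pref φ (m+1)) - f (pref φ m)) + f (X ∩ pref φ m) := by
            rw [hgm]; linarith
          linarith
        · have hXeq : X ∩ pref φ (m+1) = X ∩ pref φ m := by
            rw [hps]
            ext u; simp only [mem_inter, mem_insert]
            constructor
            · rintro ⟨h1, h2 | h2⟩
              · exact absurd (h2 ▸ h1) hiX
              · exact ⟨h1, h2⟩
            · rintro ⟨h1, h2⟩
              exact ⟨h1, Or.inr h2⟩
          rw [hXeq]; exact ih
      · have : pref φ (m+1) = pref φ m := by
          rw [pref_stable φ (m+1) (by omega), pref_stable φ m (by omega)]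
        rw [this]; exact ih
  have := key (Fintype.card V)
  rwa [pref_top, Finset.inter_univ] at this


variable (i : V) (X : Finset V)

def bpF (hk : X.card < Fintype.card V) (a : Fin X.card ≃ ↥X)
    (b : Fin (Fintype.card V - X.card - 1) ≃ ↥((univ : Finset V) \ insert i X))
    (j : Fin (Fintype.card V)) : V :=
  if h : (j : ℕ) < X.card then (a ⟨j, h⟩ : V)
  else if _h2 : (j : ℕ) = X.card then i
  else (b ⟨(j : ℕ) - X.card - 1, by have := j.isLt; omega⟩ : V)

lemma mem_sdiff_of (v : V) (h : v ∉ X) (h2 : v ≠ i) : v ∈ (univ : Finset V) \ insert i X := by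
  simp [h, h2]

def bpI (hk : X.card < Fintype.card V) (a : Fin X.card ≃ ↥X)
    (b : Fin (Fintype.card V - X.card - 1) ≃ ↥((univ : Finset V) \ insert i X))
    (v : V) : Fin (Fintype.card V) :=
  if h : v ∈ X then ⟨(a.symm ⟨v, h⟩ : Fin X.card).val, by
    have := (a.symm ⟨v, h⟩).isLt; omega⟩
  else if h2 : v = i then ⟨X.card, hk⟩
  else ⟨(b.symm ⟨v, mem_sdiff_of i X v h h2⟩).val + X.card + 1, by
    have := (b.symm ⟨v, mem_sdiff_of i X v h h2⟩).isLt; omega⟩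

variable (hiX : i ∉ X) (hk : X.card < Fintype.card V) (a : Fin X.card ≃ ↥X)
    (b : Fin (Fintype.card V - X.card - 1) ≃ ↥((univ : Finset V) \ insert i X))

lemma bpF_lt (j : Fin (Fintype.card V)) (h : (j : ℕ) < X.card) :
    bpF i X hk a b j = (a ⟨j, h⟩ : V) := dif_pos h

lemma bpF_eq (j : Fin (Fintype.card V)) (h : (j : ℕ) = X.card) :
    bpF i X hk a b j = i := by
  rw [bpF, dif_neg (by omega), dif_pos h]

lemma bpF_gt (j : Fin (Fintype.card V)) (h : X.card < (j : ℕ)) :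
    bpF i X hk a b j = (b ⟨(j : ℕ) - X.card - 1, by have := j.isLt; omega⟩ : V) := by
  rw [bpF, dif_neg (by omega), dif_neg (by omega)]

lemma bpI_mem (v : V) (h : v ∈ X) :
    bpI i X hk a b v = ⟨(a.symm ⟨v, h⟩ : Fin X.card).val, by
      have := (a.symm ⟨v, h⟩).isLt; omega⟩ := dif_pos h

include hiX in
lemma bpI_self : bpI i X hk a b i = ⟨X.card, hk⟩ := by
  rw [bpI, dif_neg hiX, dif_pos rfl]

lemma bpI_other (v : V) (h : v ∉ X) (h2 : v ≠ i) :
    bpI i X hk a b v = ⟨(b.symm ⟨v, mem_sdiff_of i X v h h2⟩).val + X.card + 1, by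
      have := (b.symm ⟨v, mem_sdiff_of i X v h h2⟩).isLt; omega⟩ := by
  rw [bpI, dif_neg h, dif_neg h2]

def buildPerm : Fin (Fintype.card V) ≃ V where
  toFun := bpF i X hk a b
  invFun := bpI i X hk a b
  left_inv := by
    intro j
    rcases lt_trichotomy (j : ℕ) X.card with h | h | h
    · rw [bpF_lt i X hk a b j h, bpI_mem i X hk a b _ (a ⟨j, h⟩).2]
      apply Fin.ext
      simp
    · rw [bpF_eq i X hk a b j h, bpI_self i X hiX hk a b]
      exact Fin.ext h.symm
    · rw [bpF_gt i X hk a b j h]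
      have hmem := (b ⟨(j : ℕ) - X.card - 1, by have := j.isLt; omega⟩).2
      rw [Finset.mem_sdiff, Finset.mem_insert] at hmem
      push_neg at hmem
      rw [bpI_other i X hk a b _ hmem.2.2 hmem.2.1]
      apply Fin.ext
      simp only [Subtype.coe_eta, Equiv.symm_apply_apply]
      have := j.isLt
      omega
  right_inv := by
    intro v
    by_cases h : v ∈ X
    · rw [bpI_mem i X hk a b v h]
      rw [bpF_lt i X hk a b _ (a.symm ⟨v, h⟩).isLt]
      simp
    · by_cases h2 : v = i
      · rw [h2, bpI_self i X hiX hk a b, bpF_eq i X hk a b _ rfl]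
      · rw [bpI_other i X hk a b v h h2]
        rw [bpF_gt i X hk a b _ (by simp only [Fin.val_mk]; omega)]
        have harg : (⟨(b.symm ⟨v, mem_sdiff_of i X v h h2⟩).val + X.card + 1 - X.card - 1,
            by have := (b.symm ⟨v, mem_sdiff_of i X v h h2⟩).isLt; omega⟩ :
            Fin (Fintype.card V - X.card - 1)) = b.symm ⟨v, mem_sdiff_of i X v h h2⟩ :=
          Fin.ext (by simp only [Fin.val_mk]; omega)
        rw [harg, Equiv.apply_symm_apply]

lemma buildPerm_symm_apply (v : V) :
    (buildPerm i X hiX hk a b).symm v = bpI i X hk a b v := rfl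

lemma buildPerm_apply (j : Fin (Fintype.card V)) :
    buildPerm i X hiX hk a b j = bpF i X hk a b j := rfl

include hiX in
lemma buildPerm_filter :
    univ.filter (fun u => (buildPerm i X hiX hk a b).symm u < (buildPerm i X hiX hk a b).symm i)
      = X := by
  ext u
  simp only [mem_filter, mem_univ, true_and, buildPerm_symm_apply, bpI_self i X hiX hk a b]
  constructor
  · intro hu
    by_contra hnu
    by_cases h2 : u = i
    · rw [h2, bpI_self i X hiX hk a b] at hu
      exact absurd hu (lt_irrefl _)
    · rw [bpI_other i X hk a b u hnu h2] at hu
      rw [Fin.lt_def] at hu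
      simp only [Fin.val_mk] at hu
      omega
  · intro hu
    rw [bpI_mem i X hk a b u hu, Fin.lt_def]
    simp only [Fin.val_mk]
    exact (a.symm ⟨u, hu⟩).isLt

omit hiX hk a b in
lemma count_fiber (hX : X ⊆ univ.erase i) :
    (univ.filter (fun φ : Fin (Fintype.card V) ≃ V =>
        univ.filter (fun u => φ.symm u < φ.symm i) = X)).card
      = X.card.factorial * (Fintype.card V - X.card - 1).factorial := by
  have hiX : i ∉ X := fun h => (Finset.mem_erase.mp (hX h)).1 rfl
  have hn : 0 < Fintype.card V := Fintype.card_pos_iff.mpr ⟨i⟩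
  have hk : X.card < Fintype.card V := by
    have := Finset.card_le_card hX
    rw [Finset.card_erase_of_mem (mem_univ i), Finset.card_univ] at this
    omega
  have hYcard : ((univ : Finset V) \ insert i X).card = Fintype.card V - X.card - 1 := by
    rw [Finset.card_sdiff_of_subset (Finset.subset_univ _), Finset.card_univ,
      Finset.card_insert_of_notMem hiX]
    omega
  have key : (univ : Finset ((Fin X.card ≃ ↥X) ×
      (Fin (Fintype.card V - X.card - 1) ≃ ↥((univ : Finset V) \ insert i X)))).card
      = (univ.filter (fun φ : Fin (Fintype.card V) ≃ V =>
        univ.filter (fun u => φ.symm u < φ.symm i) = X)).card := by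
    apply Finset.card_bij (fun ab _ => buildPerm i X hiX hk ab.1 ab.2)
    · intro ab _
      exact mem_filter.mpr ⟨mem_univ _, buildPerm_filter i X hiX hk ab.1 ab.2⟩
    · rintro ⟨a, b⟩ _ ⟨a', b'⟩ _ h
      have happ : ∀ j, buildPerm i X hiX hk a b j = buildPerm i X hiX hk a' b' j :=
        fun j => congrArg (fun ψ : Fin (Fintype.card V) ≃ V => ψ j) h
      have ha : a = a' := by
        apply Equiv.ext; intro p
        have hp := happ ⟨p, lt_trans p.isLt hk⟩
        rw [buildPerm_apply, buildPerm_apply, bpF_lt i X hk a b _ p.isLt,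
          bpF_lt i X hk a' b' _ p.isLt] at hp
        simpa using Subtype.coe_injective hp
      have hb : b = b' := by
        apply Equiv.ext; intro q
        have hq := happ ⟨q + X.card + 1, by have := q.isLt; omega⟩
        rw [buildPerm_apply, buildPerm_apply,
          bpF_gt i X hk a b _ (by simp only [Fin.val_mk]; omega),
          bpF_gt i X hk a' b' _ (by simp only [Fin.val_mk]; omega)] at hq
        have harg : (⟨(q : ℕ) + X.card + 1 - X.card - 1, by have := q.isLt; omega⟩ :
            Fin (Fintype.card V - X.card - 1)) = q := Fin.ext (by simp only [Fin.val_mk]; omega)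
        rw [harg] at hq
        exact Subtype.coe_injective hq
      rw [Prod.mk.injEq]; exact ⟨ha, hb⟩
    · intro φ hφ
      have hfil : univ.filter (fun u => φ.symm u < φ.symm i) = X := (mem_filter.mp hφ).2
      have hpos : ((φ.symm i : ℕ)) = X.card := by
        have himg : univ.filter (fun u => φ.symm u < φ.symm i)
            = (univ.filter (fun j => j < φ.symm i)).image φ := by
          ext u
          simp only [mem_filter, mem_univ, true_and, mem_image]
          constructor
          · intro hu; exact ⟨φ.symm u, hu, φ.apply_symm_apply u⟩
          · rintro ⟨j, hj, rfl⟩; simpa using hj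
        have := congrArg Finset.card himg
        rw [hfil, Finset.card_image_of_injective _ φ.injective] at this
        rw [this, show (univ.filter (fun j : Fin (Fintype.card V) => j < φ.symm i))
          = Finset.Iio (φ.symm i) by ext u; simp, Fin.card_Iio]
      have hmemX : ∀ u : V, u ∈ X ↔ φ.symm u < φ.symm i := by
        intro u
        rw [← hfil]
        simp
      have hmemA : ∀ p : Fin X.card, φ ⟨p, lt_trans p.isLt hk⟩ ∈ X := by
        intro p
        rw [hmemX]
        simp only [Equiv.symm_apply_apply, Fin.lt_def, Fin.val_mk, hpos]
        omega
      set A : Fin X.card → ↥X := fun p => ⟨φ ⟨p, lt_trans p.isLt hk⟩, hmemA p⟩ with hA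
      have hAbij : Function.Bijective A := by
        rw [Fintype.bijective_iff_injective_and_card]
        constructor
        · intro p q hpq
          have h1 := φ.injective (congrArg Subtype.val hpq)
          have h2 := congrArg Fin.val h1
          simp only [Fin.val_mk] at h2
          exact Fin.ext h2
        · rw [Fintype.card_fin, Fintype.card_coe]
      have hmemB : ∀ q : Fin (Fintype.card V - X.card - 1),
          φ ⟨(q : ℕ) + X.card + 1, by have := q.isLt; omega⟩ ∈ (univ : Finset V) \ insert i X := by
        intro q
        simp only [Finset.mem_sdiff, Finset.mem_insert, mem_univ, true_and]
        push_neg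
        constructor
        · intro hcon
          have := congrArg φ.symm hcon
          rw [Equiv.symm_apply_apply] at this
          have := congrArg Fin.val this
          simp only [Fin.val_mk, hpos] at this
          omega
        · intro hcon
          rw [hmemX] at hcon
          simp only [Equiv.symm_apply_apply, Fin.lt_def, Fin.val_mk, hpos] at hcon
          omega
      set B : Fin (Fintype.card V - X.card - 1) → ↥((univ : Finset V) \ insert i X) :=
        fun q => ⟨φ ⟨(q : ℕ) + X.card + 1, by have := q.isLt; omega⟩, hmemB q⟩ with hB
      have hBbij : Function.Bijective B := by
        rw [Fintype.bijective_iff_injective_and_card]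
        constructor
        · intro p q hpq
          have := φ.injective (congrArg Subtype.val hpq)
          have := congrArg Fin.val this
          simp only [Fin.val_mk] at this
          exact Fin.ext (by omega)
        · rw [Fintype.card_fin, Fintype.card_coe, hYcard]
      refine ⟨(Equiv.ofBijective A hAbij, Equiv.ofBijective B hBbij), mem_univ _, ?_⟩
      apply Equiv.ext
      intro j
      rw [buildPerm_apply]
      rcases lt_trichotomy (j : ℕ) X.card with h | h | h
      · rw [bpF_lt i X hk _ _ j h]
        show (A ⟨j, h⟩ : V) = φ j
        simp [hA]
      · rw [bpF_eq i X hk _ _ j h]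
        have : φ.symm i = j := Fin.ext (by rw [hpos, h])
        rw [← this, Equiv.apply_symm_apply]
      · rw [bpF_gt i X hk _ _ j h]
        show (B ⟨(j : ℕ) - X.card - 1, _⟩ : V) = φ j
        simp only [hB]
        congr 1
        exact Fin.ext (by simp only [Fin.val_mk]; omega)
  rw [← key]
  rw [Finset.card_univ, Fintype.card_prod,
    Fintype.card_equiv (Fintype.equivOfCardEq
      (by rw [Fintype.card_fin, Fintype.card_coe] : Fintype.card (Fin X.card) = Fintype.card ↥X)),
    Fintype.card_equiv (Fintype.equivOfCardEq
      (by rw [Fintype.card_fin, Fintype.card_coe, hYcard] :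
        Fintype.card (Fin (Fintype.card V - X.card - 1))
          = Fintype.card ↥((univ : Finset V) \ insert i X))),
    Fintype.card_fin, Fintype.card_fin]

omit hiX hk a b in
lemma filter_le_insert (φ : Fin (Fintype.card V) ≃ V) :
    (univ.filter fun u => φ.symm u ≤ φ.symm i)
      = insert i (univ.filter fun u => φ.symm u < φ.symm i) := by
  have heq : ∀ u : V, φ.symm u = φ.symm i ↔ u = i :=
    fun u => ⟨fun h => φ.symm.injective h, fun h => h ▸ rfl⟩
  ext u
  simp only [mem_filter, mem_univ, true_and, mem_insert, le_iff_lt_or_eq, heq]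
  tauto


omit hiX hk a b in
lemma shapley_avg (f : Finset V → ℝ) :
    shapley f i = (∑ φ : Fin (Fintype.card V) ≃ V, greedyMarginal f φ i) /
      (Fintype.card V).factorial := by
  have hmaps : ∀ φ ∈ (univ : Finset (Fin (Fintype.card V) ≃ V)),
      (univ.filter (fun u => φ.symm u < φ.symm i)) ∈ (univ.erase i).powerset := by
    intro φ _
    rw [mem_powerset]
    intro u hu
    have h2 := (mem_filter.mp hu).2
    exact Finset.mem_erase.mpr ⟨fun h => absurd (h ▸ h2) (lt_irrefl _), mem_univ u⟩
  have hstep : ∑ φ : Fin (Fintype.card V) ≃ V, greedyMarginal f φ i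
      = ∑ X ∈ (univ.erase i).powerset,
          ((X.card.factorial * (Fintype.card V - X.card - 1).factorial : ℝ))
            * (f (insert i X) - f X) := by
    rw [← Finset.sum_fiberwise_of_maps_to hmaps (fun φ => greedyMarginal f φ i)]
    apply Finset.sum_congr rfl
    intro X hX
    have hXs : X ⊆ univ.erase i := mem_powerset.mp hX
    have hcongr : ∀ φ ∈ univ.filter (fun φ : Fin (Fintype.card V) ≃ V =>
        univ.filter (fun u => φ.symm u < φ.symm i) = X),
        greedyMarginal f φ i = f (insert i X) - f X := by
      intro φ hφ
      have hf := (mem_filter.mp hφ).2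
      rw [greedyMarginal, filter_le_insert, hf]
    rw [Finset.sum_congr rfl hcongr, Finset.sum_const, count_fiber i X hXs, nsmul_eq_mul]
    push_cast
    ring
  rw [hstep, shapley, Finset.sum_div]
  apply Finset.sum_congr rfl
  intro X _
  rw [div_mul_eq_mul_div]

end Helpers


/-- The Shapley value coordinate equals the average greedy marginal over all
permutations of `V`, and consequently the Shapley value vector lies in the
base polyhedron `B(f)` of a submodular `f` with `f ∅ = 0`. -/
theorem shapley_eq_average_greedy_and_mem_base {V : Type*} [Fintype V] [DecidableEq V]
    (f : Finset V → ℝ) (h0 : f ∅ = 0)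
    (hsub : ∀ X Y : Finset V, f (X ∪ Y) + f (X ∩ Y) ≤ f X + f Y) :
    (∀ i : V, shapley f i =
        (∑ φ : Fin (Fintype.card V) ≃ V, greedyMarginal f φ i) /
          (Fintype.card V).factorial) ∧
      (∀ X : Finset V, ∑ i ∈ X, shapley f i ≤ f X) ∧
      ∑ i, shapley f i = f Finset.univ := by
  have hNcard : Fintype.card (Fin (Fintype.card V) ≃ V) = (Fintype.card V).factorial := by
    rw [Fintype.card_equiv (Fintype.equivOfCardEq (Fintype.card_fin _)), Fintype.card_fin]
  have hfpos : (0:ℝ) < ((Fintype.card V).factorial : ℝ) := by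
    exact_mod_cast Nat.factorial_pos _
  refine ⟨fun i => shapley_avg i f, ?_, ?_⟩
  · intro X
    have h1 : ∑ i ∈ X, shapley f i
        = (∑ φ : Fin (Fintype.card V) ≃ V, ∑ i ∈ X, greedyMarginal f φ i) /
          ((Fintype.card V).factorial : ℝ) := by
      rw [Finset.sum_congr rfl (fun i _ => shapley_avg i f), ← Finset.sum_div,
        Finset.sum_comm]
    rw [h1]
    rw [div_le_iff₀ hfpos]
    calc ∑ φ : Fin (Fintype.card V) ≃ V, ∑ i ∈ X, greedyMarginal f φ i
        ≤ ∑ _φ : Fin (Fintype.card V) ≃ V, f X :=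
          Finset.sum_le_sum (fun φ _ => greedy_le f h0 hsub φ X)
      _ = f X * ((Fintype.card V).factorial : ℝ) := by
          rw [Finset.sum_const, Finset.card_univ, hNcard, nsmul_eq_mul, mul_comm]
  · have h1 : ∑ i, shapley f i
        = (∑ φ : Fin (Fintype.card V) ≃ V, ∑ i, greedyMarginal f φ i) /
          ((Fintype.card V).factorial : ℝ) := by
      rw [Finset.sum_congr rfl (fun i _ => shapley_avg i f), ← Finset.sum_div,
        Finset.sum_comm]
    rw [h1]
    have h2 : ∀ φ : Fin (Fintype.card V) ≃ V, ∑ i, greedyMarginal f φ i = f univ :=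
      greedy_telescope f h0
    rw [Finset.sum_congr rfl (fun φ _ => h2 φ), Finset.sum_const, Finset.card_univ, hNcard,
      nsmul_eq_mul]
    field_simp
end

section
/- Suppose the set function f : 2^V → ℝ satisfies f(X) = ∑_{C ∈ P} f(X ∩ C) for all X ⊆ V for some partition P of V. Then for each i ∈ V, the Shapley value of i in the game (V, f) equals the Shapley value of i in the subgame (C, f|_{2^C}), where C ∈ P is the block containing i. -/
/-- The Shapley value of player `i` in the game on ground set `W` with
characteristic function `f` (only subsets of `W` are relevant). -/
noncomputable def shapleyOn {V : Type*} [DecidableEq V]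
    (f : Finset V → ℝ) (W : Finset V) (i : V) : ℝ :=
  ∑ X ∈ (W.erase i).powerset,
    ((X.card.factorial * (W.card - X.card - 1).factorial : ℝ) / W.card.factorial) *
      (f (insert i X) - f X)

namespace ShapleyAux

open Finset

noncomputable def coefA (n k : ℕ) : ℝ :=
  ((k.factorial * (n - k - 1).factorial : ℝ)) / n.factorial

lemma pascalA {n k : ℕ} (h : k < n) :
    coefA n k = coefA (n+1) k + coefA (n+1) (k+1) := by
  unfold coefA
  have h1 : n + 1 - k - 1 = (n - k - 1) + 1 := by omega
  have h2 : n + 1 - (k+1) - 1 = n - k - 1 := by omega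
  rw [h1, h2]
  simp only [Nat.factorial_succ]
  have hcast : ((n - k - 1 : ℕ) : ℝ) + 1 + (k + 1) = n + 1 := by
    have h3 : n - k - 1 + (k + 2) = n + 1 := by omega
    have := congrArg (Nat.cast : ℕ → ℝ) h3
    push_cast at this
    linarith
  have hn : (n.factorial : ℝ) ≠ 0 := by positivity
  field_simp
  push_cast
  linear_combination (-((k.factorial : ℝ) * ((n - k - 1).factorial : ℝ) * (n.factorial : ℝ))) * hcast

lemma keyA (c s : ℕ) (hs : s < c) :
    ∀ m, ∑ t ∈ range (m+1), (m.choose t : ℝ) * coefA (c+m) (s+t) = coefA c s := by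
  intro m
  induction m with
  | zero => simp
  | succ m ih =>
    have hsplit : ∀ t ∈ range (m+1),
        ((m+1).choose (t+1) : ℝ) * coefA (c+(m+1)) (s+(t+1))
        = (m.choose t : ℝ) * coefA (c+m+1) (s+t+1)
          + (m.choose (t+1) : ℝ) * coefA (c+m+1) (s+t+1) := by
      intro t _
      rw [Nat.choose_succ_succ, Nat.cast_add, add_mul]; rfl
    rw [Finset.sum_range_succ', Finset.sum_congr rfl hsplit, Finset.sum_add_distrib]
    have hT2 : ∑ t ∈ range (m+1), (m.choose (t+1) : ℝ) * coefA (c+m+1) (s+t+1)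
        = (∑ t ∈ range (m+1), (m.choose t : ℝ) * coefA (c+m+1) (s+t))
          - (m.choose 0 : ℝ) * coefA (c+m+1) (s+0) := by
      rw [Finset.sum_range_succ' (fun t => (m.choose t : ℝ) * coefA (c+m+1) (s+t)) m]
      rw [Finset.sum_range_succ]
      simp
      rfl
    rw [hT2]
    have hfin : ∀ t ∈ range (m+1),
        (m.choose t : ℝ) * coefA (c+m+1) (s+t+1) + (m.choose t : ℝ) * coefA (c+m+1) (s+t)
        = (m.choose t : ℝ) * coefA (c+m) (s+t) := by
      intro t ht
      rw [← mul_add]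
      congr 1
      rw [pascalA (by simp at ht; omega : s + t < c + m)]
      ring_nf
    calc (∑ t ∈ range (m+1), (m.choose t : ℝ) * coefA (c+m+1) (s+t+1))
          + ((∑ t ∈ range (m+1), (m.choose t : ℝ) * coefA (c+m+1) (s+t))
            - (m.choose 0 : ℝ) * coefA (c+m+1) (s+0))
          + ((m+1).choose 0 : ℝ) * coefA (c+(m+1)) (s+0)
        = ∑ t ∈ range (m+1), ((m.choose t : ℝ) * coefA (c+m+1) (s+t+1)
            + (m.choose t : ℝ) * coefA (c+m+1) (s+t)) := by
          rw [Finset.sum_add_distrib]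
          simp [show c + (m+1) = c + m + 1 from rfl]
          ring
      _ = ∑ t ∈ range (m+1), (m.choose t : ℝ) * coefA (c+m) (s+t) :=
          Finset.sum_congr rfl hfin
      _ = coefA c s := ih

lemma sum_powerset_union' {α : Type*} [DecidableEq α] {s t : Finset α} (h : Disjoint s t)
    (F : Finset α → ℝ) :
    ∑ X ∈ (s ∪ t).powerset, F X = ∑ p ∈ s.powerset ×ˢ t.powerset, F (p.1 ∪ p.2) := by
  refine Finset.sum_nbij' (fun X => (X ∩ s, X ∩ t)) (fun p => p.1 ∪ p.2) ?_ ?_ ?_ ?_ ?_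
  · intro X hX
    simp only [mem_product, mem_powerset]
    exact ⟨inter_subset_right, inter_subset_right⟩
  · intro p hp
    simp only [mem_product, mem_powerset] at hp
    exact mem_powerset.mpr (union_subset_union hp.1 hp.2)
  · intro X hX
    simp only [mem_powerset] at hX
    show (X ∩ s) ∪ (X ∩ t) = X
    rw [← Finset.inter_union_distrib_left]
    exact inter_eq_left.mpr hX
  · intro p hp
    simp only [mem_product, mem_powerset] at hp
    show ((p.1 ∪ p.2) ∩ s, (p.1 ∪ p.2) ∩ t) = p
    have h1 : (p.1 ∪ p.2) ∩ s = p.1 := by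
      ext a
      simp only [mem_inter, mem_union]
      constructor
      · rintro ⟨ha | ha, has⟩
        · exact ha
        · exact absurd has (disjoint_left.mp h.symm (hp.2 ha))
      · exact fun ha => ⟨Or.inl ha, hp.1 ha⟩
    have h2 : (p.1 ∪ p.2) ∩ t = p.2 := by
      ext a
      simp only [mem_inter, mem_union]
      constructor
      · rintro ⟨ha | ha, hat⟩
        · exact absurd hat (disjoint_left.mp h (hp.1 ha))
        · exact ha
      · exact fun ha => ⟨Or.inr ha, hp.2 ha⟩
    exact Prod.ext h1 h2
  · intro X hX
    simp only [mem_powerset] at hX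
    show F X = F ((X ∩ s) ∪ (X ∩ t))
    rw [← Finset.inter_union_distrib_left, inter_eq_left.mpr hX]

end ShapleyAux

open Finset ShapleyAux

/-- If the game `(V, f)` decomposes additively across a partition `P` of `V`,
then the Shapley value of each player `i` in the grand game equals the Shapley
value of `i` in the subgame on the block of `P` containing `i`. -/
theorem shapley_decomposition {V : Type*} [Fintype V] [DecidableEq V]
    (f : Finset V → ℝ) (P : Finset (Finset V))
    (hne : ∀ C ∈ P, C.Nonempty)
    (hdisj : ∀ C ∈ P, ∀ C' ∈ P, C ≠ C' → Disjoint C C')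
    (hcover : ∀ i : V, ∃ C ∈ P, i ∈ C)
    (hdec : ∀ X : Finset V, f X = ∑ C ∈ P, f (X ∩ C)) :
    ∀ (i : V) (C : Finset V), C ∈ P → i ∈ C →
      shapleyOn f Finset.univ i = shapleyOn f C i := by
  intro i C hC hiC
  classical
  set n := (Finset.univ : Finset V).card with hn
  set c := C.card with hc
  set T := (Finset.univ : Finset V) \ C with hT
  set m := T.card with hm
  have hcle : c ≤ n := Finset.card_le_card (Finset.subset_univ C)
  have hcm : c + m = n := by
    rw [hm, hT, Finset.card_sdiff_of_subset (Finset.subset_univ C)]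
    omega
  have hc1 : 1 ≤ c := Finset.card_pos.mpr ⟨i, hiC⟩
  -- marginal contributions only depend on the block of i
  have hmarg : ∀ X : Finset V,
      f (insert i X) - f X = f (insert i (X ∩ C)) - f (X ∩ C) := by
    intro X
    rw [hdec (insert i X), hdec X, ← Finset.sum_sub_distrib]
    rw [Finset.sum_eq_single_of_mem C hC]
    · rw [Finset.insert_inter_of_mem hiC]
    · intro C' hC' hne'
      rw [Finset.insert_inter_of_notMem]
      · exact sub_self _
      · intro hiC'
        exact Finset.disjoint_left.mp (hdisj C' hC' C hC hne') hiC' hiC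
  -- decompose the ground set
  have hdisjCT : Disjoint (C.erase i) T := by
    exact Finset.disjoint_sdiff.mono_left (Finset.erase_subset i C)
  have heq : (Finset.univ : Finset V).erase i = (C.erase i) ∪ T := by
    ext a
    simp only [Finset.mem_erase, Finset.mem_union, Finset.mem_sdiff, Finset.mem_univ,
      true_and, and_true, hT]
    constructor
    · intro hne'
      by_cases hac : a ∈ C
      · exact Or.inl ⟨hne', hac⟩
      · exact Or.inr hac
    · rintro (⟨hne', _⟩ | hac)
      · exact hne'
      · exact fun h => hac (h ▸ hiC)
  -- rewrite both Shapley values using coefA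
  show (∑ X ∈ ((Finset.univ : Finset V).erase i).powerset,
      coefA n X.card * (f (insert i X) - f X))
    = ∑ X ∈ (C.erase i).powerset, coefA c X.card * (f (insert i X) - f X)
  calc
    ∑ X ∈ ((Finset.univ : Finset V).erase i).powerset,
        coefA n X.card * (f (insert i X) - f X)
      = ∑ X ∈ ((Finset.univ : Finset V).erase i).powerset,
          coefA n X.card * (f (insert i (X ∩ C)) - f (X ∩ C)) := by
        exact Finset.sum_congr rfl fun X _ => by rw [hmarg X]
    _ = ∑ p ∈ (C.erase i).powerset ×ˢ T.powerset,
          coefA n (p.1 ∪ p.2).card * (f (insert i ((p.1 ∪ p.2) ∩ C)) - f ((p.1 ∪ p.2) ∩ C)) := by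
        rw [heq, sum_powerset_union' hdisjCT]
    _ = ∑ p ∈ (C.erase i).powerset ×ˢ T.powerset,
          coefA n (p.1.card + p.2.card) * (f (insert i p.1) - f p.1) := by
        refine Finset.sum_congr rfl fun p hp => ?_
        simp only [Finset.mem_product, Finset.mem_powerset] at hp
        have hdp : Disjoint p.1 p.2 := hdisjCT.mono hp.1 hp.2
        have hinter : (p.1 ∪ p.2) ∩ C = p.1 := by
          ext a
          simp only [Finset.mem_inter, Finset.mem_union]
          constructor
          · rintro ⟨ha | ha, hac⟩
            · exact ha
            · exact absurd hac (Finset.mem_sdiff.mp (hp.2 ha)).2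
          · exact fun ha => ⟨Or.inl ha, Finset.mem_of_mem_erase (hp.1 ha)⟩
        rw [hinter, Finset.card_union_of_disjoint hdp]
    _ = ∑ A ∈ (C.erase i).powerset, ∑ B ∈ T.powerset,
          coefA n (A.card + B.card) * (f (insert i A) - f A) := by
        rw [Finset.sum_product]
    _ = ∑ A ∈ (C.erase i).powerset,
          (∑ B ∈ T.powerset, coefA n (A.card + B.card)) * (f (insert i A) - f A) := by
        exact Finset.sum_congr rfl fun A _ => by rw [Finset.sum_mul]
    _ = ∑ A ∈ (C.erase i).powerset, coefA c A.card * (f (insert i A) - f A) := by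
        refine Finset.sum_congr rfl fun A hA => ?_
        congr 1
        have hAcard : A.card < c := by
          have h1 : A.card ≤ (C.erase i).card :=
            Finset.card_le_card (Finset.mem_powerset.mp hA)
          rw [Finset.card_erase_of_mem hiC] at h1
          omega
        calc ∑ B ∈ T.powerset, coefA n (A.card + B.card)
            = ∑ j ∈ Finset.range (m + 1), ∑ B ∈ Finset.powersetCard j T,
                coefA n (A.card + B.card) := by
              rw [Finset.sum_powerset]
          _ = ∑ j ∈ Finset.range (m + 1), (m.choose j : ℝ) * coefA (c + m) (A.card + j) := by
              refine Finset.sum_congr rfl fun j _ => ?_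
              have hB : ∀ B ∈ Finset.powersetCard j T,
                  coefA n (A.card + B.card) = coefA (c + m) (A.card + j) := by
                intro B hB
                rw [(Finset.mem_powersetCard.mp hB).2, ← hcm]
              rw [Finset.sum_congr rfl hB, Finset.sum_const, Finset.card_powersetCard,
                nsmul_eq_mul]
          _ = coefA c A.card := keyA c A.card hAcard m
end

section
/- If f : 2^V → ℝ satisfies f(X) = ∑_{C ∈ P} f(X ∩ C) for all X ⊆ V for a partition P of V, and f is submodular with f(∅)=0, then the base polyhedron decomposes as a direct sum: B(f) = { ⊕_{C ∈ P} x_C : x_C ∈ B_C(f) for each C ∈ P }, where B_C(f) = {x ∈ ℝ^C : x(X) ≤ f(X) ∀ X ⊆ C, x(C) = f(C)}. -/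
/-! Both `X ↦ x(X)` and `f` split over the blocks of `P` as sums of their values on the
pieces `X ∩ C`, the first because `P` is a partition and the second by hypothesis. For two
such set functions, the global conditions `x ≤ f` and `x(V) = f(V)` are equivalent to the
blockwise ones: `x(V) = ∑ x(C) ≤ ∑ f(C) = f(V)` forces equality on every block, and
conversely `x(X) = ∑ x(X ∩ C) ≤ ∑ f(X ∩ C) = f(X)`. -/

open Finset

theorem Finset.sum_eq_sum_sum_inter {ι M : Type*} [DecidableEq ι] [AddCommMonoid M]
    {P : Finset (Finset ι)} (hdisj : (P : Set (Finset ι)).PairwiseDisjoint id)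
    {X : Finset ι} (hX : ∀ i ∈ X, ∃ C ∈ P, i ∈ C) (g : ι → M) :
    ∑ i ∈ X, g i = ∑ C ∈ P, ∑ i ∈ X ∩ C, g i := by
  have hX_eq : X = P.biUnion (X ∩ ·) := by
    ext i
    simp only [mem_biUnion, mem_inter]
    exact ⟨fun hi ↦ (hX i hi).imp fun C ⟨hC, hiC⟩ ↦ ⟨hC, hi, hiC⟩,
      fun ⟨_, _, hi, _⟩ ↦ hi⟩
  conv_lhs => rw [hX_eq]
  exact sum_biUnion (hdisj.mono fun _ ↦ inter_subset_right)

theorem le_and_eq_univ_iff_forall_block {V M : Type*} [Fintype V] [DecidableEq V]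
    [AddCommMonoid M] [PartialOrder M] [IsOrderedCancelAddMonoid M]
    {P : Finset (Finset V)} {g h : Finset V → M}
    (hg : ∀ X, g X = ∑ C ∈ P, g (X ∩ C)) (hh : ∀ X, h X = ∑ C ∈ P, h (X ∩ C)) :
    ((∀ X, g X ≤ h X) ∧ g univ = h univ) ↔
      ∀ C ∈ P, (∀ X ⊆ C, g X ≤ h X) ∧ g C = h C := by
  have hg_univ : g univ = ∑ C ∈ P, g C := by simpa only [univ_inter] using hg univ
  have hh_univ : h univ = ∑ C ∈ P, h C := by simpa only [univ_inter] using hh univ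
  constructor
  · rintro ⟨hle, heq⟩ C hC
    have hblocks := (sum_eq_sum_iff_of_le fun C _ ↦ hle C).mp (hg_univ ▸ hh_univ ▸ heq)
    exact ⟨fun X _ ↦ hle X, hblocks C hC⟩
  · intro hblock
    refine ⟨fun X ↦ ?_, ?_⟩
    · rw [hg X, hh X]
      exact sum_le_sum fun C hC ↦ (hblock C hC).1 _ inter_subset_right
    · rw [hg_univ, hh_univ]
      exact sum_congr rfl fun C hC ↦ (hblock C hC).2

theorem base_polyhedron_decomposition_general {V : Type*} [Fintype V] [DecidableEq V]
    (f : Finset V → ℝ) (P : Finset (Finset V))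
    (hdisj : ∀ C ∈ P, ∀ C' ∈ P, C ≠ C' → Disjoint C C')
    (hcover : ∀ i : V, ∃ C ∈ P, i ∈ C)
    (hdec : ∀ X : Finset V, f X = ∑ C ∈ P, f (X ∩ C)) :
    ∀ x : V → ℝ,
      ((∀ X : Finset V, ∑ i ∈ X, x i ≤ f X) ∧ ∑ i, x i = f Finset.univ) ↔
        (∀ C ∈ P, (∀ X : Finset V, X ⊆ C → ∑ i ∈ X, x i ≤ f X) ∧
          ∑ i ∈ C, x i = f C) := fun x ↦
  le_and_eq_univ_iff_forall_block
    (fun X ↦ sum_eq_sum_sum_inter (fun C hC C' hC' ↦ hdisj C hC C' hC')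
      (fun i _ ↦ hcover i) x)
    hdec

/-- Decomposition of the base polyhedron: if a submodular `f` with `f ∅ = 0`
decomposes additively across a partition `P` of `V`, then a vector lies in the
base polyhedron `B(f)` if and only if, for each block `C ∈ P`, its restriction
to `C` lies in the base polyhedron `B_C(f)` of the subgame on `C`.  (This is
exactly the statement that `B(f)` is the direct sum of the `B_C(f)`.) -/
theorem base_polyhedron_decomposition {V : Type*} [Fintype V] [DecidableEq V]
    (f : Finset V → ℝ) (P : Finset (Finset V))
    (h0 : f ∅ = 0)
    (hsub : ∀ X Y : Finset V, f (X ∪ Y) + f (X ∩ Y) ≤ f X + f Y)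
    (hne : ∀ C ∈ P, C.Nonempty)
    (hdisj : ∀ C ∈ P, ∀ C' ∈ P, C ≠ C' → Disjoint C C')
    (hcover : ∀ i : V, ∃ C ∈ P, i ∈ C)
    (hdec : ∀ X : Finset V, f X = ∑ C ∈ P, f (X ∩ C)) :
    ∀ x : V → ℝ,
      ((∀ X : Finset V, ∑ i ∈ X, x i ≤ f X) ∧ ∑ i, x i = f Finset.univ) ↔
        (∀ C ∈ P, (∀ X : Finset V, X ⊆ C → ∑ i ∈ X, x i ≤ f X) ∧
          ∑ i ∈ C, x i = f C) :=
  base_polyhedron_decomposition_general f P hdisj hcover hdec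
end

section
/- Let f : 2^V → ℝ be an intersecting submodular function with f(∅) = 0 (submodular inequality holding whenever X ∩ Y ≠ ∅). Then its Dilworth truncation f̂(X) = min over partitions P of X of ∑_{C ∈ P} f(C) (with f̂(∅)=0) is a fully submodular function on 2^V. -/
open Finset

/-- `P` is a partition of the finite set `X` into nonempty blocks. -/
def IsPartitionOf {V : Type*} [DecidableEq V] (P : Finset (Finset V)) (X : Finset V) : Prop :=
  (∀ C ∈ P, C.Nonempty) ∧
    (∀ C ∈ P, ∀ C' ∈ P, C ≠ C' → Disjoint C C') ∧
    P.sup id = X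

/-- The Dilworth truncation `f̂(X) = min_{P ∈ Π(X)} ∑_{C ∈ P} f(C)` of a set
function `f` (for `X = ∅` the only partition is the empty one, giving `f̂ ∅ = 0`). -/
noncomputable def dilworthTruncation {V : Type*} [DecidableEq V]
    (f : Finset V → ℝ) (X : Finset V) : ℝ :=
  sInf {s : ℝ | ∃ P : Finset (Finset V), IsPartitionOf P X ∧ s = ∑ C ∈ P, f C}

section Aux

variable {V : Type*} [DecidableEq V]

/-- Coverage multiplicity of a point by a multiset family. -/
def covm (F : Multiset (Finset V)) (v : V) : ℕ := F.countP (v ∈ ·)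

lemma covm_cons (A : Finset V) (F : Multiset (Finset V)) (v : V) :
    covm (A ::ₘ F) v = covm F v + (if v ∈ A then 1 else 0) := by
  simp [covm, Multiset.countP_cons]

lemma covm_add (F G : Multiset (Finset V)) (v : V) :
    covm (F + G) v = covm F v + covm G v := by
  simp [covm, Multiset.countP_add]

lemma covm_pos {F : Multiset (Finset V)} {v : V} :
    0 < covm F v ↔ ∃ A ∈ F, v ∈ A := by
  simp [covm, Multiset.countP_pos]

lemma count_le_covm {F : Multiset (Finset V)} {B : Finset V} {v : V} (hv : v ∈ B) :
    F.count B ≤ covm F v := by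
  rw [covm, Multiset.countP_eq_card_filter]
  calc F.count B = (F.filter (v ∈ ·)).count B := by rw [Multiset.count_filter, if_pos hv]
    _ ≤ _ := Multiset.count_le_card _ _

lemma two_le_covm {F : Multiset (Finset V)} {B C : Finset V} {v : V}
    (hB : B ∈ F) (hC : C ∈ F) (hBC : B ≠ C) (hvB : v ∈ B) (hvC : v ∈ C) :
    2 ≤ covm F v := by
  rw [covm, Multiset.countP_eq_card_filter]
  have hB' : B ∈ F.filter (v ∈ ·) := Multiset.mem_filter.2 ⟨hB, hvB⟩
  have hC' : C ∈ (F.filter (v ∈ ·)).erase B := by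
    rw [Multiset.mem_erase_of_ne hBC.symm]
    exact Multiset.mem_filter.2 ⟨hC, hvC⟩
  have h1 : 0 < Multiset.card ((F.filter (v ∈ ·)).erase B) :=
    Multiset.card_pos.2 (fun h => by simp [h] at hC')
  have h2 : B ::ₘ (F.filter (v ∈ ·)).erase B = F.filter (v ∈ ·) := Multiset.cons_erase hB'
  rw [← h2, Multiset.card_cons]
  omega

lemma sum_card_eq [Fintype V] (F : Multiset (Finset V)) :
    (F.map Finset.card).sum = ∑ v, covm F v := by
  induction F using Multiset.induction with
  | empty => simp [covm]
  | cons A F ih =>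
    simp only [Multiset.map_cons, Multiset.sum_cons, ih, covm_cons, Finset.sum_add_distrib]
    have : ∑ v : V, (if v ∈ A then 1 else 0) = A.card := by
      rw [Finset.sum_ite_mem, Finset.univ_inter, Finset.card_eq_sum_ones]
    omega

lemma sum_sq_le [Fintype V] {F : Multiset (Finset V)} (hcov : ∀ v, covm F v ≤ 2) :
    (F.map fun A => A.card ^ 2).sum ≤ 2 * Fintype.card V ^ 2 := by
  have h1 : (F.map fun A => A.card ^ 2).sum ≤ (F.map fun A => Fintype.card V * A.card).sum := by
    apply Multiset.sum_map_le_sum_map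
    intro A _
    have := Finset.card_le_univ A
    calc A.card ^ 2 = A.card * A.card := sq A.card
      _ ≤ Fintype.card V * A.card := Nat.mul_le_mul_right _ (by simpa using this)
  have h2 : (F.map fun A => Fintype.card V * A.card).sum
      = Fintype.card V * (F.map Finset.card).sum := by
    rw [← Multiset.sum_map_mul_left]
  have h3 : (F.map Finset.card).sum ≤ 2 * Fintype.card V := by
    rw [sum_card_eq]
    calc ∑ v, covm F v ≤ ∑ _v : V, 2 := Finset.sum_le_sum (fun v _ => hcov v)
      _ = 2 * Fintype.card V := by simp [mul_comm]
  calc (F.map fun A => A.card ^ 2).sum ≤ Fintype.card V * (F.map Finset.card).sum :=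
        le_trans h1 (le_of_eq h2)
    _ ≤ Fintype.card V * (2 * Fintype.card V) := Nat.mul_le_mul_left _ h3
    _ = 2 * Fintype.card V ^ 2 := by ring

lemma covm_of_partition {P : Finset (Finset V)} {X : Finset V} (hP : IsPartitionOf P X) (v : V) :
    covm P.val v = if v ∈ X then 1 else 0 := by
  obtain ⟨hne, hdisj, hsup⟩ := hP
  split_ifs with hv
  · rw [← hsup] at hv
    obtain ⟨C, hC, hvC⟩ := Finset.mem_sup.mp hv
    have hfil : P.filter (fun D => v ∈ D) = {C} := by
      ext D
      simp only [Finset.mem_filter, Finset.mem_singleton]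
      constructor
      · rintro ⟨hD, hvD⟩
        by_contra hne'
        exact Finset.disjoint_left.1 (hdisj D hD C hC hne') hvD hvC
      · rintro rfl; exact ⟨hC, hvC⟩
    have : covm P.val v = (P.filter (fun D => v ∈ D)).card := by
      rw [covm, Multiset.countP_eq_card_filter]; rfl
    rw [this, hfil, Finset.card_singleton]
  · rw [covm]
    by_contra h
    have : 0 < P.val.countP (v ∈ ·) := Nat.pos_of_ne_zero (fun h0 => h (by rw [h0]))
    obtain ⟨C, hC, hvC⟩ := Multiset.countP_pos.1 this
    exact hv (hsup ▸ Finset.mem_sup.2 ⟨C, hC, hvC⟩)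

lemma sum_eq_multiset (f : Finset V → ℝ) (P : Finset (Finset V)) :
    ∑ C ∈ P, f C = (P.val.map f).sum := rfl

/-- The laminar case of the uncrossing argument. -/
lemma laminar_case [Fintype V] (f : Finset V → ℝ) {F : Multiset (Finset V)}
    (hne : ∀ A ∈ F, A.Nonempty) (hcov : ∀ v, covm F v ≤ 2)
    (hlam : ∀ A ∈ F, ∀ B ∈ F, (A ∩ B).Nonempty → A ⊆ B ∨ B ⊆ A) :
    ∃ P₁ P₂ : Finset (Finset V),
      IsPartitionOf P₁ (Finset.univ.filter fun v => 1 ≤ covm F v) ∧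
      IsPartitionOf P₂ (Finset.univ.filter fun v => covm F v = 2) ∧
      (∑ C ∈ P₁, f C) + (∑ C ∈ P₂, f C) ≤ (F.map f).sum := by
  classical
  set P₁ : Finset (Finset V) := F.toFinset.filter (fun A => ∀ B ∈ F.toFinset, ¬ A ⊂ B) with hP₁def
  have hP₁F : ∀ A ∈ P₁, A ∈ F := fun A hA =>
    Multiset.mem_toFinset.1 (Finset.mem_filter.1 hA).1
  -- every set has a maximal set above it
  have hmax : ∀ A ∈ F, ∃ M ∈ P₁, A ⊆ M := by
    intro A hA
    have hSne : (F.toFinset.filter (fun B => A ⊆ B)).Nonempty :=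
      ⟨A, Finset.mem_filter.2 ⟨Multiset.mem_toFinset.2 hA, Finset.Subset.refl A⟩⟩
    obtain ⟨M, hM, hMmax⟩ := Finset.exists_max_image _ Finset.card hSne
    obtain ⟨hMF, hAM⟩ := Finset.mem_filter.1 hM
    refine ⟨M, Finset.mem_filter.2 ⟨hMF, ?_⟩, hAM⟩
    intro B hB hMB
    have hB' : B ∈ F.toFinset.filter (fun B => A ⊆ B) :=
      Finset.mem_filter.2 ⟨hB, hAM.trans hMB.subset⟩
    exact absurd (hMmax B hB') (not_le.2 (Finset.card_lt_card hMB))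
  -- disjointness of maximal sets
  have hdisjP₁ : ∀ A ∈ P₁, ∀ B ∈ P₁, A ≠ B → Disjoint A B := by
    intro A hA B hB hAB
    rw [Finset.disjoint_left]
    intro v hvA hvB
    rcases hlam A (hP₁F A hA) B (hP₁F B hB) ⟨v, Finset.mem_inter.2 ⟨hvA, hvB⟩⟩ with h | h
    · exact (Finset.mem_filter.1 hA).2 B (Multiset.mem_toFinset.2 (hP₁F B hB))
        (Finset.ssubset_iff_subset_ne.2 ⟨h, hAB⟩)
    · exact (Finset.mem_filter.1 hB).2 A (Multiset.mem_toFinset.2 (hP₁F A hA))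
        (Finset.ssubset_iff_subset_ne.2 ⟨h, hAB.symm⟩)
  have hP₁val_le : P₁.val ≤ F := by
    rw [Multiset.le_iff_count]
    intro A
    by_cases hA : A ∈ P₁
    · have h1 : P₁.val.count A = 1 := by
        rw [Multiset.count_eq_one_of_mem P₁.nodup hA]
      rw [h1]
      exact Multiset.one_le_count_iff_mem.2 (hP₁F A hA)
    · simp [Multiset.count_eq_zero_of_notMem hA]
  set P₂m : Multiset (Finset V) := F - P₁.val with hP₂def
  have hsplit : P₂m + P₁.val = F := tsub_add_cancel_of_le hP₁val_le
  have hP₂le : P₂m ≤ F := Multiset.sub_le_self _ _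
  have hcovsplit : ∀ v, covm P₂m v + covm P₁.val v = covm F v := by
    intro v; rw [← covm_add, hsplit]
  have hcovP₁le : ∀ v, covm P₁.val v ≤ 1 := by
    intro v
    rw [covm, Multiset.countP_eq_card_filter]
    have : (P₁.val.filter (v ∈ ·)) = (P₁.filter (v ∈ ·)).val := rfl
    rw [this]
    rw [show Multiset.card (P₁.filter (v ∈ ·)).val = (P₁.filter (v ∈ ·)).card from rfl]
    rw [Finset.card_le_one]
    intro A hA B hB
    obtain ⟨hA1, hA2⟩ := Finset.mem_filter.1 hA
    obtain ⟨hB1, hB2⟩ := Finset.mem_filter.1 hB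
    by_contra hAB
    exact Finset.disjoint_left.1 (hdisjP₁ A hA1 B hB1 hAB) hA2 hB2
  have hcovP₁pos : ∀ v, 1 ≤ covm F v → 0 < covm P₁.val v := by
    intro v hv
    obtain ⟨A, hA, hvA⟩ := covm_pos.1 hv
    obtain ⟨M, hM, hAM⟩ := hmax A hA
    exact covm_pos.2 ⟨M, hM, hAM hvA⟩
  -- P₂m has no duplicates
  have hP₂nodup : P₂m.Nodup := by
    rw [Multiset.nodup_iff_count_le_one]
    intro B
    by_contra h
    push_neg at h
    have hB : B ∈ P₂m := Multiset.one_le_count_iff_mem.1 (by omega)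
    obtain ⟨v, hv⟩ := hne B (Multiset.mem_of_le hP₂le hB)
    have h2 : 2 ≤ covm P₂m v := le_trans h (count_le_covm hv)
    have h3 : 0 < covm P₁.val v :=
      hcovP₁pos v (by have := hcovsplit v; omega)
    have := hcov v
    have := hcovsplit v
    omega
  set P₂ : Finset (Finset V) := ⟨P₂m, hP₂nodup⟩ with hP₂'def
  have hP₂mem : ∀ B, B ∈ P₂ ↔ B ∈ P₂m := fun B => Iff.rfl
  refine ⟨P₁, P₂, ⟨?_, hdisjP₁, ?_⟩, ⟨?_, ?_, ?_⟩, ?_⟩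
  · exact fun C hC => hne C (hP₁F C hC)
  · -- sup P₁ = {v | 1 ≤ covm F v}
    ext v
    simp only [Finset.mem_sup, id, Finset.mem_filter, Finset.mem_univ, true_and]
    constructor
    · rintro ⟨C, hC, hvC⟩
      exact covm_pos.2 ⟨C, hP₁F C hC, hvC⟩
    · intro hv
      obtain ⟨A, hA, hvA⟩ := covm_pos.1 hv
      obtain ⟨M, hM, hAM⟩ := hmax A hA
      exact ⟨M, hM, hAM hvA⟩
  · exact fun C hC => hne C (Multiset.mem_of_le hP₂le hC)
  · -- disjointness in P₂
    intro B hB C hC hBC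
    rw [Finset.disjoint_left]
    intro v hvB hvC
    have h2 : 2 ≤ covm P₂m v := two_le_covm hB hC hBC hvB hvC
    have h3 : 0 < covm P₁.val v := by
      apply hcovP₁pos
      have h1 : 0 < covm F v := by
        have := hcovsplit v; omega
      omega
    have := hcov v
    have := hcovsplit v
    omega
  · -- sup P₂ = {v | covm F v = 2}
    ext v
    simp only [Finset.mem_sup, id, Finset.mem_filter, Finset.mem_univ, true_and]
    constructor
    · rintro ⟨B, hB, hvB⟩
      have h1 : 0 < covm P₂m v := covm_pos.2 ⟨B, hB, hvB⟩
      have h2 : 0 < covm P₁.val v := by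
        apply hcovP₁pos
        have := hcovsplit v; omega
      have := hcov v
      have := hcovsplit v
      omega
    · intro hv
      have h1 : covm P₁.val v ≤ 1 := hcovP₁le v
      have h2 : 0 < covm P₂m v := by
        have := hcovsplit v; omega
      exact covm_pos.1 h2
  · -- the sum
    rw [sum_eq_multiset, sum_eq_multiset, ← hsplit]
    simp [Multiset.map_add]
    exact le_of_eq (by rw [add_comm]; rfl)

/-- The uncrossing induction. -/
lemma uncross {V : Type*} [Fintype V] [DecidableEq V] (f : Finset V → ℝ)
    (hint : ∀ X Y : Finset V, (X ∩ Y).Nonempty → f (X ∪ Y) + f (X ∩ Y) ≤ f X + f Y) :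
    ∀ (n : ℕ) (F : Multiset (Finset V)),
      2 * Fintype.card V ^ 2 - (F.map fun A => A.card ^ 2).sum ≤ n →
      (∀ A ∈ F, A.Nonempty) → (∀ v, covm F v ≤ 2) →
      ∃ P₁ P₂ : Finset (Finset V),
        IsPartitionOf P₁ (Finset.univ.filter fun v => 1 ≤ covm F v) ∧
        IsPartitionOf P₂ (Finset.univ.filter fun v => covm F v = 2) ∧
        (∑ C ∈ P₁, f C) + (∑ C ∈ P₂, f C) ≤ (F.map f).sum := by
  intro n
  induction n using Nat.strong_induction_on with
  | _ n ih =>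
    intro F hn hne hcov
    by_cases hlam : ∀ A ∈ F, ∀ B ∈ F, (A ∩ B).Nonempty → A ⊆ B ∨ B ⊆ A
    · exact laminar_case f hne hcov hlam
    · push_neg at hlam
      obtain ⟨A, hA, B, hB, hABne, hAB, hBA⟩ := hlam
      have hABne' : A ≠ B := fun h => hAB (h ▸ Finset.Subset.refl A)
      have hBe : B ∈ F.erase A := (Multiset.mem_erase_of_ne hABne'.symm).2 hB
      set rest := (F.erase A).erase B with hrest
      have hF : F = A ::ₘ B ::ₘ rest := by
        rw [hrest, Multiset.cons_erase hBe, Multiset.cons_erase hA]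
      set F' := (A ∪ B) ::ₘ (A ∩ B) ::ₘ rest with hF'
      have hcoveq : ∀ v, covm F' v = covm F v := by
        intro v
        rw [hF, hF']
        simp only [covm_cons]
        by_cases h1 : v ∈ A <;> by_cases h2 : v ∈ B <;>
          simp [Finset.mem_union, Finset.mem_inter, h1, h2]
      have hne' : ∀ C ∈ F', C.Nonempty := by
        intro C hC
        rw [hF'] at hC
        rcases Multiset.mem_cons.1 hC with rfl | hC
        · exact (hne A hA).mono Finset.subset_union_left
        rcases Multiset.mem_cons.1 hC with rfl | hC
        · exact hABne
        · exact hne C (by rw [hF]; exact Multiset.mem_cons_of_mem (Multiset.mem_cons_of_mem hC))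
      have hcov' : ∀ v, covm F' v ≤ 2 := fun v => (hcoveq v) ▸ hcov v
      -- cardinality increase
      have hcardA : A.card < (A ∪ B).card := by
        apply Finset.card_lt_card
        rw [Finset.ssubset_iff_subset_ne]
        refine ⟨Finset.subset_union_left, fun h => ?_⟩
        exact hBA (h ▸ Finset.subset_union_right)
      have hcardB : B.card < (A ∪ B).card := by
        apply Finset.card_lt_card
        rw [Finset.ssubset_iff_subset_ne]
        refine ⟨Finset.subset_union_right, fun h => ?_⟩
        exact hAB (h ▸ Finset.subset_union_left)
      have hcardsum : (A ∪ B).card + (A ∩ B).card = A.card + B.card :=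
        Finset.card_union_add_card_inter A B
      have hsqlt : A.card ^ 2 + B.card ^ 2 < (A ∪ B).card ^ 2 + (A ∩ B).card ^ 2 := by
        zify at hcardA hcardB hcardsum ⊢
        nlinarith [mul_pos (by linarith : (0:ℤ) < (A ∪ B).card - A.card)
          (by linarith : (0:ℤ) < (A ∪ B).card - B.card)]
      have hsum_lt : (F.map fun C => C.card ^ 2).sum < (F'.map fun C => C.card ^ 2).sum := by
        rw [hF, hF']
        simp only [Multiset.map_cons, Multiset.sum_cons]
        omega
      have hbound : (F'.map fun C => C.card ^ 2).sum ≤ 2 * Fintype.card V ^ 2 :=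
        sum_sq_le hcov'
      have hμ' : 2 * Fintype.card V ^ 2 - (F'.map fun C => C.card ^ 2).sum <
          2 * Fintype.card V ^ 2 - (F.map fun C => C.card ^ 2).sum := by
        omega
      obtain ⟨P₁, P₂, h₁, h₂, hs⟩ := ih _ (lt_of_lt_of_le hμ' hn) F' le_rfl hne' hcov'
      have hset1 : (Finset.univ.filter fun v => 1 ≤ covm F' v)
          = (Finset.univ.filter fun v => 1 ≤ covm F v) := by
        apply Finset.filter_congr; intro v _; rw [hcoveq]
      have hset2 : (Finset.univ.filter fun v => covm F' v = 2)
          = (Finset.univ.filter fun v => covm F v = 2) := by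
        apply Finset.filter_congr; intro v _; rw [hcoveq]
      refine ⟨P₁, P₂, hset1 ▸ h₁, hset2 ▸ h₂, le_trans hs ?_⟩
      rw [hF, hF']
      simp only [Multiset.map_cons, Multiset.sum_cons]
      have := hint A B hABne
      linarith

lemma exists_partitionOf (X : Finset V) : ∃ P : Finset (Finset V), IsPartitionOf P X := by
  by_cases h : X = ∅
  · exact ⟨∅, by simp [IsPartitionOf, h]⟩
  · refine ⟨{X}, ?_, ?_, ?_⟩
    · intro C hC
      rw [Finset.mem_singleton] at hC
      subst hC
      exact Finset.nonempty_iff_ne_empty.2 h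
    · intro C hC C' hC' hCC'
      rw [Finset.mem_singleton] at hC hC'
      exact absurd (hC.trans hC'.symm) hCC'
    · simp

lemma dT_set_finite [Fintype V] (f : Finset V → ℝ) (X : Finset V) :
    {s : ℝ | ∃ P : Finset (Finset V), IsPartitionOf P X ∧ s = ∑ C ∈ P, f C}.Finite := by
  apply Set.Finite.subset (Set.finite_range fun P : Finset (Finset V) => ∑ C ∈ P, f C)
  rintro s ⟨P, _, rfl⟩
  exact ⟨P, rfl⟩

lemma dT_le [Fintype V] (f : Finset V → ℝ) {P : Finset (Finset V)} {X : Finset V}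
    (hP : IsPartitionOf P X) : dilworthTruncation f X ≤ ∑ C ∈ P, f C :=
  csInf_le (dT_set_finite f X).bddBelow ⟨P, hP, rfl⟩

lemma dT_exists [Fintype V] (f : Finset V → ℝ) (X : Finset V) :
    ∃ P : Finset (Finset V), IsPartitionOf P X ∧ dilworthTruncation f X = ∑ C ∈ P, f C := by
  have hne : {s : ℝ | ∃ P : Finset (Finset V), IsPartitionOf P X ∧ s = ∑ C ∈ P, f C}.Nonempty := by
    obtain ⟨P, hP⟩ := exists_partitionOf X
    exact ⟨∑ C ∈ P, f C, P, hP, rfl⟩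
  exact hne.csInf_mem (dT_set_finite f X)

end Aux

/-- The Dilworth truncation of an intersecting submodular function with
`f ∅ = 0` is fully submodular. -/
theorem dilworthTruncation_submodular {V : Type*} [Fintype V] [DecidableEq V]
    (f : Finset V → ℝ) (h0 : f ∅ = 0)
    (hint : ∀ X Y : Finset V, (X ∩ Y).Nonempty →
      f (X ∪ Y) + f (X ∩ Y) ≤ f X + f Y) :
    ∀ X Y : Finset V,
      dilworthTruncation f (X ∪ Y) + dilworthTruncation f (X ∩ Y) ≤
        dilworthTruncation f X + dilworthTruncation f Y := by
  intro X Y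
  obtain ⟨P, hP, hPv⟩ := dT_exists f X
  obtain ⟨Q, hQ, hQv⟩ := dT_exists f Y
  set F : Multiset (Finset V) := P.val + Q.val with hFdef
  have hcovF : ∀ v, covm F v = (if v ∈ X then 1 else 0) + (if v ∈ Y then 1 else 0) := by
    intro v
    rw [hFdef, covm_add, covm_of_partition hP, covm_of_partition hQ]
  have hne : ∀ A ∈ F, A.Nonempty := by
    intro A hA
    rcases Multiset.mem_add.1 hA with h | h
    · exact hP.1 A h
    · exact hQ.1 A h
  have hcov : ∀ v, covm F v ≤ 2 := by
    intro v; rw [hcovF]; split_ifs <;> omega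
  obtain ⟨P₁, P₂, h₁, h₂, hs⟩ := uncross f hint _ F le_rfl hne hcov
  have hset1 : (Finset.univ.filter fun v => 1 ≤ covm F v) = X ∪ Y := by
    ext v
    simp only [Finset.mem_filter, Finset.mem_univ, true_and, Finset.mem_union, hcovF]
    split_ifs <;> simp_all <;> omega
  have hset2 : (Finset.univ.filter fun v => covm F v = 2) = X ∩ Y := by
    ext v
    simp only [Finset.mem_filter, Finset.mem_univ, true_and, Finset.mem_inter, hcovF]
    split_ifs <;> simp_all
  rw [hset1] at h₁
  rw [hset2] at h₂
  have hle1 : dilworthTruncation f (X ∪ Y) ≤ ∑ C ∈ P₁, f C := dT_le f h₁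
  have hle2 : dilworthTruncation f (X ∩ Y) ≤ ∑ C ∈ P₂, f C := dT_le f h₂
  have hFsum : (F.map f).sum = (∑ C ∈ P, f C) + (∑ C ∈ Q, f C) := by
    rw [hFdef, Multiset.map_add, Multiset.sum_add, sum_eq_multiset, sum_eq_multiset]
  rw [hPv, hQv, ← hFsum]
  linarith
end

section
/- Let f be intersecting submodular with f(∅)=0 and f̂ its Dilworth truncation. Then the polyhedra coincide: {x ∈ ℝ^V : x(X) ≤ f(X) ∀ X ⊆ V} = {x ∈ ℝ^V : x(X) ≤ f̂(X) ∀ X ⊆ V}. -/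
open Finset

namespace IsPartitionOf

variable {V : Type*} [DecidableEq V] {P : Finset (Finset V)} {X : Finset V}

theorem subset_of_mem (hP : IsPartitionOf P X) {C : Finset V} (hC : C ∈ P) : C ⊆ X :=
  hP.2.2 ▸ le_sup (f := id) hC

theorem mem_powerset_powerset (hP : IsPartitionOf P X) : P ∈ X.powerset.powerset :=
  mem_powerset.mpr fun _ hC => mem_powerset.mpr (hP.subset_of_mem hC)

theorem sum_eq_sum_sum {M : Type*} [AddCommMonoid M] (hP : IsPartitionOf P X) (x : V → M) :
    ∑ i ∈ X, x i = ∑ C ∈ P, ∑ i ∈ C, x i := by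
  rw [← hP.2.2, sup_eq_biUnion]
  exact sum_biUnion fun C hC C' hC' hne => hP.2.1 C hC C' hC' hne

end IsPartitionOf

section DilworthTruncation

variable {V : Type*} [DecidableEq V]

theorem isPartitionOf_filter_nonempty_singleton (X : Finset V) :
    IsPartitionOf (filter Finset.Nonempty {X}) X := by
  refine ⟨fun C hC => (mem_filter.mp hC).2, fun C hC C' hC' hne => ?_, ?_⟩
  · exact absurd ((mem_singleton.mp (mem_filter.mp hC).1).trans
      (mem_singleton.mp (mem_filter.mp hC').1).symm) hne
  · rw [filter_singleton]
    split_ifs with hX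
    · exact sup_singleton
    · simp [not_nonempty_iff_eq_empty.mp hX]

variable (f : Finset V → ℝ)

theorem bddBelow_partition_sums (X : Finset V) :
    BddBelow {s : ℝ | ∃ P : Finset (Finset V), IsPartitionOf P X ∧ s = ∑ C ∈ P, f C} := by
  refine ((X.powerset.powerset.image fun P => ∑ C ∈ P, f C).finite_toSet.subset ?_).bddBelow
  rintro s ⟨P, hP, rfl⟩
  exact mem_coe.mpr (mem_image_of_mem _ hP.mem_powerset_powerset)

theorem dilworthTruncation_le (h0 : f ∅ = 0) (X : Finset V) : dilworthTruncation f X ≤ f X := by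
  refine csInf_le (bddBelow_partition_sums f X)
    ⟨_, isPartitionOf_filter_nonempty_singleton X, ?_⟩
  rw [filter_singleton]
  split_ifs with hX
  · exact sum_singleton f X |>.symm
  · simp [not_nonempty_iff_eq_empty.mp hX, h0]

theorem sum_le_dilworthTruncation {x : V → ℝ} (hx : ∀ C, ∑ i ∈ C, x i ≤ f C) (X : Finset V) :
    ∑ i ∈ X, x i ≤ dilworthTruncation f X := by
  refine le_csInf ⟨_, _, isPartitionOf_filter_nonempty_singleton X, rfl⟩ ?_
  rintro s ⟨P, hP, rfl⟩
  rw [hP.sum_eq_sum_sum x]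
  exact sum_le_sum fun C _ => hx C

end DilworthTruncation

theorem polyhedron_eq_dilworth_polyhedron_general {V : Type*} [DecidableEq V]
    (f : Finset V → ℝ) (h0 : f ∅ = 0) :
    {x : V → ℝ | ∀ X : Finset V, ∑ i ∈ X, x i ≤ f X} =
      {x : V → ℝ | ∀ X : Finset V, ∑ i ∈ X, x i ≤ dilworthTruncation f X} := by
  ext x
  exact ⟨fun hx => sum_le_dilworthTruncation f hx,
    fun hx X => (hx X).trans (dilworthTruncation_le f h0 X)⟩

/-- The polyhedron of an intersecting submodular function `f` with `f ∅ = 0`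
coincides with the polyhedron of its Dilworth truncation `f̂`. -/
theorem polyhedron_eq_dilworth_polyhedron {V : Type*} [Fintype V] [DecidableEq V]
    (f : Finset V → ℝ) (h0 : f ∅ = 0)
    (hint : ∀ X Y : Finset V, (X ∩ Y).Nonempty →
      f (X ∪ Y) + f (X ∩ Y) ≤ f X + f Y) :
    {x : V → ℝ | ∀ X : Finset V, ∑ i ∈ X, x i ≤ f X} =
      {x : V → ℝ | ∀ X : Finset V, ∑ i ∈ X, x i ≤ dilworthTruncation f X} :=
  polyhedron_eq_dilworth_polyhedron_general f h0
end

section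
/- Let f be submodular with f(∅)=0, x ∈ B(f), and i, j ∈ V distinct. There exists ε > 0 with x + ε(χ_i − χ_j) ∈ B(f) if and only if j ∈ dep(x,i)∖{i}, where dep(x,i) is the unique minimal minimizer of min{f(X) − x(X) : i ∈ X ⊆ V}. Equivalently, j ∉ dep(x,i) iff there is a set X with i ∈ X, j ∉ X and x(X) = f(X). -/
/-!
Since `x ∈ B(f)`, the whole ground set is tight, so the minimum of `f(X) - x(X)` over `X ∋ i` is `0`
and its minimizers are exactly the tight sets containing `i`. Moving mass `ε` from `j` to `i`
raises `x(X)` only on the sets with `i ∈ X`, `j ∉ X`, so it stays in `B(f)` for some `ε > 0`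
exactly when none of those sets is tight, i.e. when every tight set containing `i` contains `j`.
-/

attribute [local instance] Classical.propDecidable

/-- `X` is a minimizer of `min { f(Y) - x(Y) : i ∈ Y ⊆ V }`. -/
def IsMinimizerAt {V : Type*} [Fintype V] [DecidableEq V]
    (f : Finset V → ℝ) (x : V → ℝ) (i : V) (X : Finset V) : Prop :=
  i ∈ X ∧ ∀ Y : Finset V, i ∈ Y →
    f X - ∑ k ∈ X, x k ≤ f Y - ∑ k ∈ Y, x k

/-- `dep(x, i)`: the intersection of all minimizers of
`min { f(Y) - x(Y) : i ∈ Y ⊆ V }`. -/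
noncomputable def dep {V : Type*} [Fintype V] [DecidableEq V]
    (f : Finset V → ℝ) (x : V → ℝ) (i : V) : Finset V :=
  Finset.univ.filter fun v => ∀ X : Finset V, IsMinimizerAt f x i X → v ∈ X

section BasePolyhedron

variable {V : Type*} [DecidableEq V]

def exchange (x : V → ℝ) (ε : ℝ) (i j : V) : V → ℝ :=
  fun k => x k + ε * ((if k = i then 1 else 0) - (if k = j then 1 else 0))

theorem sum_exchange (x : V → ℝ) (ε : ℝ) (i j : V) (X : Finset V) :
    ∑ k ∈ X, exchange x ε i j k =
      ∑ k ∈ X, x k + ε * ((if i ∈ X then 1 else 0) - (if j ∈ X then 1 else 0)) := by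
  simp only [exchange, Finset.sum_add_distrib, ← Finset.mul_sum, Finset.sum_sub_distrib,
    Finset.sum_ite_eq']

variable [Fintype V]

def basePolyhedron (f : Finset V → ℝ) : Set (V → ℝ) :=
  {x | (∀ X : Finset V, ∑ k ∈ X, x k ≤ f X) ∧ ∑ k, x k = f Finset.univ}

variable {f : Finset V → ℝ} {x : V → ℝ}

theorem isMinimizerAt_iff_sum_eq (hx : x ∈ basePolyhedron f) {i : V} {X : Finset V}
    (hiX : i ∈ X) : IsMinimizerAt f x i X ↔ ∑ k ∈ X, x k = f X := by
  refine ⟨fun hmin => ?_, fun htight => ⟨hiX, fun Y _ => ?_⟩⟩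
  · have := hmin.2 Finset.univ (Finset.mem_univ i)
    linarith [hx.1 X, hx.2]
  · linarith [hx.1 Y]

theorem notMem_dep_iff (hx : x ∈ basePolyhedron f) (i j : V) :
    j ∉ dep f x i ↔ ∃ X : Finset V, i ∈ X ∧ j ∉ X ∧ ∑ k ∈ X, x k = f X := by
  simp only [dep, Finset.mem_filter, Finset.mem_univ, true_and, not_forall, exists_prop]
  constructor
  · rintro ⟨X, hmin, hjX⟩
    exact ⟨X, hmin.1, hjX, (isMinimizerAt_iff_sum_eq hx hmin.1).1 hmin⟩
  · rintro ⟨X, hiX, hjX, htight⟩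
    exact ⟨X, (isMinimizerAt_iff_sum_eq hx hiX).2 htight, hjX⟩

theorem sum_lt_of_exchange_mem {ε : ℝ} (hε : 0 < ε) {i j : V}
    (hmem : exchange x ε i j ∈ basePolyhedron f) {X : Finset V} (hiX : i ∈ X) (hjX : j ∉ X) :
    ∑ k ∈ X, x k < f X := by
  have := hmem.1 X
  rw [sum_exchange, if_pos hiX, if_neg hjX] at this
  linarith

/-- The step `ε` is the least slack `f(X) - x(X)` over the sets with `i ∈ X`, `j ∉ X`. -/
theorem exists_exchange_mem (hx : x ∈ basePolyhedron f) {i j : V} (hij : i ≠ j)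
    (hslack : ∀ X : Finset V, i ∈ X → j ∉ X → ∑ k ∈ X, x k < f X) :
    ∃ ε : ℝ, 0 < ε ∧ exchange x ε i j ∈ basePolyhedron f := by
  set S := Finset.univ.filter fun X : Finset V => i ∈ X ∧ j ∉ X
  have hS : S.Nonempty := ⟨{i}, by simp [S, hij.symm]⟩
  set ε := S.inf' hS fun X => f X - ∑ k ∈ X, x k
  have hε : 0 < ε := (Finset.lt_inf'_iff hS).2 fun X hX => by
    simp only [S, Finset.mem_filter, Finset.mem_univ, true_and] at hX
    linarith [hslack X hX.1 hX.2]
  refine ⟨ε, hε, fun X => ?_, ?_⟩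
  · rw [sum_exchange]
    by_cases hiX : i ∈ X <;> by_cases hjX : j ∈ X <;> simp only [hiX, hjX, if_true, if_false]
    · linarith [hx.1 X]
    · have : ε ≤ f X - ∑ k ∈ X, x k :=
        Finset.inf'_le _ (by simp [S, hiX, hjX])
      linarith
    · linarith [hx.1 X]
    · linarith [hx.1 X]
  · simpa [sum_exchange] using hx.2

end BasePolyhedron

theorem exchange_iff_mem_dep_general {V : Type*} [Fintype V] [DecidableEq V]
    (f : Finset V → ℝ)
    (x : V → ℝ)
    (hx : (∀ X : Finset V, ∑ k ∈ X, x k ≤ f X) ∧ ∑ k, x k = f Finset.univ)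
    (i j : V) (hij : i ≠ j) :
    ((∃ ε : ℝ, 0 < ε ∧
        (∀ X : Finset V,
          ∑ k ∈ X, (x k + ε * ((if k = i then 1 else 0) - (if k = j then 1 else 0))) ≤ f X) ∧
        ∑ k, (x k + ε * ((if k = i then 1 else 0) - (if k = j then 1 else 0))) = f Finset.univ)
      ↔ j ∈ dep f x i \ {i}) ∧
    (j ∉ dep f x i ↔
      ∃ X : Finset V, i ∈ X ∧ j ∉ X ∧ ∑ k ∈ X, x k = f X) := by
  have hdep := notMem_dep_iff (f := f) hx i j
  refine ⟨?_, hdep⟩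
  change (∃ ε : ℝ, 0 < ε ∧ exchange x ε i j ∈ basePolyhedron f) ↔ _
  rw [Finset.mem_sdiff, Finset.mem_singleton, and_iff_left hij.symm]
  constructor
  · rintro ⟨ε, hε, hmem⟩
    by_contra hj
    obtain ⟨X, hiX, hjX, htight⟩ := hdep.1 hj
    exact (sum_lt_of_exchange_mem hε hmem hiX hjX).ne htight
  · intro hj
    exact exists_exchange_mem hx hij fun X hiX hjX =>
      (hx.1 X).lt_of_ne fun htight => hdep.2 ⟨X, hiX, hjX, htight⟩ hj

/-- For distinct `i, j` and `x` in the base polyhedron `B(f)`, there is `ε > 0`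
with `x + ε (χ_i - χ_j) ∈ B(f)` iff `j ∈ dep(x, i) \ {i}`; equivalently,
`j ∉ dep(x, i)` iff there is a tight set `X` (`x(X) = f(X)`) with `i ∈ X`,
`j ∉ X`. -/
theorem exchange_iff_mem_dep {V : Type*} [Fintype V] [DecidableEq V]
    (f : Finset V → ℝ) (h0 : f ∅ = 0)
    (hsub : ∀ X Y : Finset V, f (X ∪ Y) + f (X ∩ Y) ≤ f X + f Y)
    (x : V → ℝ)
    (hx : (∀ X : Finset V, ∑ k ∈ X, x k ≤ f X) ∧ ∑ k, x k = f Finset.univ)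
    (i j : V) (hij : i ≠ j) :
    ((∃ ε : ℝ, 0 < ε ∧
        (∀ X : Finset V,
          ∑ k ∈ X, (x k + ε * ((if k = i then 1 else 0) - (if k = j then 1 else 0))) ≤ f X) ∧
        ∑ k, (x k + ε * ((if k = i then 1 else 0) - (if k = j then 1 else 0))) = f Finset.univ)
      ↔ j ∈ dep f x i \ {i}) ∧
    (j ∉ dep f x i ↔
      ∃ X : Finset V, i ∈ X ∧ j ∉ X ∧ ∑ k ∈ X, x k = f X) :=
  exchange_iff_mem_dep_general f x hx i j hij
end

section
/- Let B be the base polyhedron of a submodular function f with f(∅)=0, and g(x) = ∑_{i∈V} x_i²/w_i with weights w_i > 0. Then x* ∈ B minimizes g over B if and only if for all i, j ∈ V and all ε > 0 with x* + ε(χ_i − χ_j) ∈ B, we have g(x*) ≤ g(x* + ε(χ_i − χ_j)). (Local optimality with respect to elementary exchanges implies global optimality.) -/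
open Finset

section LocalGlobalAux

set_option linter.unusedSectionVars false

variable {V : Type*} [Fintype V] [DecidableEq V]

lemma abel_key {V : Type*} [Fintype V] [DecidableEq V] :
    ∀ n : ℕ, ∀ d z : V → ℝ, (Finset.univ.image d).card ≤ n →
    (∑ k, z k = 0) →
    (∀ t : ℝ, ∑ k ∈ Finset.univ.filter (fun k => d k ≤ t), z k ≤ 0) →
    0 ≤ ∑ k, d k * z k := by
  intro n
  induction n with
  | zero =>
    intro d z hc hz hlev
    have hemp : (Finset.univ.image d) = ∅ := Finset.card_eq_zero.mp (Nat.le_zero.mp hc)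
    have hempty : (Finset.univ : Finset V) = ∅ := by
      by_contra h
      obtain ⟨k, hk⟩ := Finset.nonempty_iff_ne_empty.mpr h
      have hm : d k ∈ Finset.univ.image d := Finset.mem_image_of_mem d hk
      rw [hemp] at hm
      exact absurd hm (Finset.notMem_empty _)
    rw [hempty]; simp
  | succ n ih =>
    intro d z hc hz hlev
    by_cases hV : (Finset.univ : Finset V).Nonempty
    · set S := Finset.univ.image d with hS
      have hSne : S.Nonempty := hV.image d
      set t₁ := S.min' hSne with ht1
      by_cases hone : S.card = 1
      · -- d is constant t₁
        have hall : ∀ k, d k = t₁ := by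
          intro k
          have hk : d k ∈ S := Finset.mem_image_of_mem d (Finset.mem_univ k)
          have := Finset.card_eq_one.mp hone
          obtain ⟨a, ha⟩ := this
          rw [ha] at hk
          have ht1a : t₁ ∈ S := S.min'_mem hSne
          rw [ha] at ht1a
          simp at hk ht1a
          rw [hk, ht1a]
        have heq : ∑ k, d k * z k = t₁ * ∑ k, z k := by
          rw [Finset.mul_sum]; exact Finset.sum_congr rfl (fun k _ => by rw [hall k])
        rw [heq, hz, mul_zero]
      · -- at least two values
        have h2 : 2 ≤ S.card := by
          have h1 : 1 ≤ S.card := Finset.card_pos.mpr hSne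
          omega
        have hSe : (S.erase t₁).Nonempty := by
          rw [← Finset.card_pos, Finset.card_erase_of_mem (S.min'_mem hSne)]
          omega
        set t₂ := (S.erase t₁).min' hSe with ht2
        have ht2S : t₂ ∈ S.erase t₁ := (S.erase t₁).min'_mem hSe
        have ht12 : t₁ < t₂ := by
          have h1 : t₁ ≤ t₂ := S.min'_le _ (Finset.mem_of_mem_erase ht2S)
          have h2' : t₂ ≠ t₁ := Finset.ne_of_mem_erase ht2S
          exact lt_of_le_of_ne h1 (Ne.symm h2')
        set d' : V → ℝ := fun k => max (d k) t₂ with hd'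
        have hmin : ∀ k, t₁ ≤ d k := fun k =>
          S.min'_le _ (Finset.mem_image_of_mem d (Finset.mem_univ k))
        have hcases : ∀ k, d k = t₁ ∨ t₂ ≤ d k := by
          intro k
          by_cases h : d k = t₁
          · exact Or.inl h
          · right
            exact (S.erase t₁).min'_le _ (Finset.mem_erase.mpr ⟨h, Finset.mem_image_of_mem d (Finset.mem_univ k)⟩)
        have hd'val : ∀ k, (d k = t₁ ∧ d' k = t₂) ∨ (d' k = d k ∧ t₂ ≤ d k) := by
          intro k
          rcases hcases k with h | h
          · left; exact ⟨h, by simp [hd', h, le_of_lt ht12]⟩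
          · right; exact ⟨by simp [hd', h], h⟩
        -- image of d'
        have himg : Finset.univ.image d' ⊆ S.erase t₁ := by
          intro v hv
          obtain ⟨k, _, hk⟩ := Finset.mem_image.mp hv
          rcases hd'val k with ⟨_, h2⟩ | ⟨h1, h2⟩
          · rw [← hk, h2]; exact ht2S
          · rw [← hk, h1]
            exact Finset.mem_erase.mpr ⟨fun h => absurd (h ▸ h2) (not_le.mpr ht12),
              Finset.mem_image_of_mem d (Finset.mem_univ k)⟩
        have hcard' : (Finset.univ.image d').card ≤ n := by
          have := Finset.card_le_card himg
          rw [Finset.card_erase_of_mem (S.min'_mem hSne)] at this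
          omega
        -- level sets of d'
        have hlev' : ∀ t : ℝ, ∑ k ∈ Finset.univ.filter (fun k => d' k ≤ t), z k ≤ 0 := by
          intro t
          by_cases ht : t₂ ≤ t
          · have : Finset.univ.filter (fun k => d' k ≤ t) = Finset.univ.filter (fun k => d k ≤ t) := by
              apply Finset.filter_congr
              intro k _
              rcases hd'val k with ⟨h1, h2⟩ | ⟨h1, _⟩
              · simp only [h1, h2]
                constructor <;> intro <;> [exact le_trans (le_of_lt ht12) ht; exact ht]
              · rw [h1]
            rw [this]; exact hlev t
          · have : Finset.univ.filter (fun k => d' k ≤ t) = ∅ := by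
              apply Finset.filter_eq_empty_iff.mpr
              intro k _
              push_neg
              rcases hd'val k with ⟨_, h2⟩ | ⟨h1, h2⟩
              · rw [h2]; exact lt_of_not_ge ht
              · rw [h1]; exact lt_of_lt_of_le (lt_of_not_ge ht) h2
            rw [this]; simp
        have hih := ih d' z hcard' hz hlev'
        -- relate sums
        have hsplit : ∑ k, d k * z k =
            ∑ k, d' k * z k - (t₂ - t₁) * ∑ k ∈ Finset.univ.filter (fun k => d k ≤ t₁), z k := by
          rw [Finset.mul_sum, Finset.sum_filter, ← Finset.sum_sub_distrib]
          apply Finset.sum_congr rfl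
          intro k _
          rcases hd'val k with ⟨h1, h2⟩ | ⟨h1, h2⟩
          · simp only [h1, h2, if_pos (le_refl t₁)]
            ring
          · have : ¬ (d k ≤ t₁) := not_le.mpr (lt_of_lt_of_le ht12 h2)
            simp only [h1, if_neg this]
            ring
        rw [hsplit]
        have hlt1 := hlev t₁
        nlinarith [hlt1, hih, ht12]
    · rw [Finset.not_nonempty_iff_eq_empty] at hV
      rw [hV]; simp

-- tight sets closed under union / intersection
lemma tight_union_inter (f : Finset V → ℝ)
    (hsub : ∀ X Y : Finset V, f (X ∪ Y) + f (X ∩ Y) ≤ f X + f Y)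
    (x : V → ℝ) (hx1 : ∀ X : Finset V, ∑ k ∈ X, x k ≤ f X)
    (X Y : Finset V) (hX : ∑ k ∈ X, x k = f X) (hY : ∑ k ∈ Y, x k = f Y) :
    (∑ k ∈ X ∪ Y, x k = f (X ∪ Y)) ∧ (∑ k ∈ X ∩ Y, x k = f (X ∩ Y)) := by
  have hsum : ∑ k ∈ X ∪ Y, x k + ∑ k ∈ X ∩ Y, x k = ∑ k ∈ X, x k + ∑ k ∈ Y, x k :=
    Finset.sum_union_inter
  have h1 := hx1 (X ∪ Y)
  have h2 := hx1 (X ∩ Y)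
  have h3 := hsub X Y
  constructor <;> linarith

-- a nonempty finite union of tight sets is tight
lemma tight_sup {ι : Type*} (f : Finset V → ℝ)
    (hsub : ∀ X Y : Finset V, f (X ∪ Y) + f (X ∩ Y) ≤ f X + f Y)
    (x : V → ℝ) (hx1 : ∀ X : Finset V, ∑ k ∈ X, x k ≤ f X)
    (S : Finset ι) (hS : S.Nonempty) (g : ι → Finset V)
    (hg : ∀ a ∈ S, ∑ k ∈ g a, x k = f (g a)) :
    ∑ k ∈ S.sup g, x k = f (S.sup g) := by
  induction hS using Finset.Nonempty.cons_induction with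
  | singleton a => simpa using hg a (by simp)
  | cons a S ha hS ih =>
    rw [Finset.sup_cons]
    have h1 : ∑ k ∈ g a, x k = f (g a) := hg a (Finset.mem_cons_self a S)
    have h2 : ∑ k ∈ S.sup g, x k = f (S.sup g) :=
      ih (fun b hb => hg b (Finset.mem_cons_of_mem hb))
    have := (tight_union_inter f hsub x hx1 (g a) (S.sup g) h1 h2).1
    simpa [Finset.sup_eq_union] using this

-- a nonempty finite intersection of tight sets containing i is tight and contains i
lemma tight_inf (f : Finset V → ℝ)
    (hsub : ∀ X Y : Finset V, f (X ∪ Y) + f (X ∩ Y) ≤ f X + f Y)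
    (x : V → ℝ) (hx1 : ∀ X : Finset V, ∑ k ∈ X, x k ≤ f X) (i : V)
    (S : Finset (Finset V)) (hS : S.Nonempty)
    (hg : ∀ X ∈ S, (∑ k ∈ X, x k = f X) ∧ i ∈ X) :
    (∑ k ∈ S.inf' hS id, x k = f (S.inf' hS id)) ∧ i ∈ S.inf' hS id := by
  induction hS using Finset.Nonempty.cons_induction with
  | singleton a => simpa using hg a (by simp)
  | cons a S ha hS ih =>
    rw [Finset.inf'_cons (H := hS)]
    have h1 := hg a (Finset.mem_cons_self a S)
    have h2 := ih (fun b hb => hg b (Finset.mem_cons_of_mem hb))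
    have := (tight_union_inter f hsub x hx1 a (S.inf' hS id) h1.1 h2.1).2
    refine ⟨this, ?_⟩
    simp only [Finset.inf_eq_inter, Finset.mem_inter]
    exact ⟨h1.2, h2.2⟩

-- exchange capacity: if no tight set separates i from j, an exchange move is feasible
lemma exchange_feasible (f : Finset V → ℝ)
    (x : V → ℝ) (hx1 : ∀ X : Finset V, ∑ k ∈ X, x k ≤ f X)
    (hx2 : ∑ k, x k = f Finset.univ)
    (i j : V) (hij : i ≠ j)
    (hsep : ∀ X : Finset V, (∑ k ∈ X, x k = f X) → i ∈ X → j ∈ X) :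
    ∃ ε : ℝ, 0 < ε ∧
      ((∀ X : Finset V,
          ∑ k ∈ X, (x k + ε * ((if k = i then 1 else 0) - (if k = j then 1 else 0))) ≤ f X) ∧
        ∑ k, (x k + ε * ((if k = i then 1 else 0) - (if k = j then 1 else 0))) =
          f Finset.univ) := by
  classical
  set S : Finset (Finset V) :=
    (Finset.univ : Finset (Finset V)).filter (fun X => i ∈ X ∧ j ∉ X) with hSdef
  have hSne : S.Nonempty := by
    refine ⟨{i}, ?_⟩
    simp [hSdef, hij, Ne.symm hij]
  set ε : ℝ := S.inf' hSne (fun X => f X - ∑ k ∈ X, x k) with hε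
  have hεpos : 0 < ε := by
    rw [hε, Finset.lt_inf'_iff]
    intro X hX
    rw [hSdef, Finset.mem_filter] at hX
    have hle := hx1 X
    have hne : ∑ k ∈ X, x k ≠ f X := fun h => hX.2.2 (hsep X h hX.2.1)
    have : ∑ k ∈ X, x k < f X := lt_of_le_of_ne hle hne
    linarith
  refine ⟨ε, hεpos, ?_, ?_⟩
  · intro X
    have hsplit : ∑ k ∈ X, (x k + ε * ((if k = i then 1 else 0) - (if k = j then 1 else 0)))
        = ∑ k ∈ X, x k + ε * ((if i ∈ X then (1:ℝ) else 0) - (if j ∈ X then 1 else 0)) := by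
      rw [Finset.sum_add_distrib]
      congr 1
      rw [← Finset.mul_sum]
      congr 1
      rw [Finset.sum_sub_distrib]
      congr 1
      · simp [Finset.sum_ite_eq', eq_comm]
      · simp [Finset.sum_ite_eq', eq_comm]
    rw [hsplit]
    by_cases hi : i ∈ X <;> by_cases hj : j ∈ X <;> simp only [hi, hj, if_pos, if_neg,
      if_true, if_false]
    · simpa using hx1 X
    · have hXS : X ∈ S := by simp [hSdef, hi, hj]
      have := Finset.inf'_le (fun X => f X - ∑ k ∈ X, x k) hXS
      simp only [sub_zero, mul_one]
      linarith
    · have := hx1 X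
      nlinarith
    · simpa using hx1 X
  · have hsplit : ∑ k, (x k + ε * ((if k = i then 1 else 0) - (if k = j then 1 else 0)))
        = ∑ k, x k + ε * ((1:ℝ) - 1) := by
      rw [Finset.sum_add_distrib]
      congr 1
      rw [← Finset.mul_sum]
      congr 1
      rw [Finset.sum_sub_distrib]
      congr 1
      · simp [Finset.sum_ite_eq', eq_comm]
      · simp [Finset.sum_ite_eq', eq_comm]
    rw [hsplit]
    simpa using hx2


-- quadratic expansion of g along an exchange direction of g along an exchange direction
lemma g_expand (w : V → ℝ) (hw : ∀ i, 0 < w i) (x : V → ℝ)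
    (i j : V) (hij : i ≠ j) (ε : ℝ) :
    ∑ k, (x k + ε * ((if k = i then 1 else 0) - (if k = j then 1 else 0))) ^ 2 / w k
      = ∑ k, x k ^ 2 / w k
        + ε * (2 * x i / w i - 2 * x j / w j) + ε ^ 2 * (1 / w i + 1 / w j) := by
  have hpt : ∀ k, (x k + ε * ((if k = i then 1 else 0) - (if k = j then 1 else 0))) ^ 2 / w k
      = x k ^ 2 / w k
        + ((if k = i then ε * (2 * x i / w i) + ε ^ 2 * (1 / w i) else 0)
          + (if k = j then ε * (-(2 * x j / w j)) + ε ^ 2 * (1 / w j) else 0)) := by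
    intro k
    by_cases hi : k = i
    · subst hi
      simp only [if_pos rfl, if_neg hij, eq_self_iff_true, if_true]
      have hwk := (hw k).ne'
      field_simp
      ring
    · by_cases hj : k = j
      · subst hj
        simp only [if_pos rfl, if_neg hi, eq_self_iff_true, if_true]
        have hwk := (hw k).ne'
        field_simp
        ring
      · rw [if_neg hi, if_neg hj, if_neg hi, if_neg hj]
        ring
  rw [Finset.sum_congr rfl (fun k _ => hpt k), Finset.sum_add_distrib,
    Finset.sum_add_distrib, Finset.sum_ite_eq' Finset.univ i, Finset.sum_ite_eq' Finset.univ j]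
  simp only [Finset.mem_univ, if_pos]
  ring

-- feasibility is downward closed in ε along an exchange direction
lemma feas_mono (f : Finset V → ℝ) (x : V → ℝ)
    (hx1 : ∀ X : Finset V, ∑ k ∈ X, x k ≤ f X)
    (hx2 : ∑ k, x k = f Finset.univ)
    (i j : V) (ε ε' : ℝ) (h0 : 0 < ε') (hle : ε' ≤ ε)
    (hfeas : (∀ X : Finset V,
          ∑ k ∈ X, (x k + ε * ((if k = i then 1 else 0) - (if k = j then 1 else 0))) ≤ f X) ∧
        ∑ k, (x k + ε * ((if k = i then 1 else 0) - (if k = j then 1 else 0))) =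
          f Finset.univ) :
    (∀ X : Finset V,
        ∑ k ∈ X, (x k + ε' * ((if k = i then 1 else 0) - (if k = j then 1 else 0))) ≤ f X) ∧
      ∑ k, (x k + ε' * ((if k = i then 1 else 0) - (if k = j then 1 else 0))) =
        f Finset.univ := by
  have hsplit : ∀ (δ : ℝ) (X : Finset V),
      ∑ k ∈ X, (x k + δ * ((if k = i then 1 else 0) - (if k = j then 1 else 0)))
      = ∑ k ∈ X, x k + δ * ((if i ∈ X then (1:ℝ) else 0) - (if j ∈ X then 1 else 0)) := by
    intro δ X
    rw [Finset.sum_add_distrib]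
    congr 1
    rw [← Finset.mul_sum]
    congr 1
    rw [Finset.sum_sub_distrib]
    congr 1
    · simp [Finset.sum_ite_eq', eq_comm]
    · simp [Finset.sum_ite_eq', eq_comm]
  constructor
  · intro X
    have h1 := hfeas.1 X
    rw [hsplit ε X] at h1
    rw [hsplit ε' X]
    set s : ℝ := (if i ∈ X then (1:ℝ) else 0) - (if j ∈ X then 1 else 0) with hs
    have hx := hx1 X
    rcases le_or_gt s 0 with h | h
    · nlinarith
    · nlinarith
  · have h1 := hfeas.2
    rw [hsplit ε Finset.univ] at h1
    rw [hsplit ε' Finset.univ]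
    simp only [Finset.mem_univ, if_pos] at h1 ⊢
    nlinarith [hx2]


lemma limit_step (C D ε : ℝ) (hD : 0 < D) (hε : 0 < ε)
    (h : ∀ ε' : ℝ, 0 < ε' → ε' ≤ ε → 0 ≤ ε' * C + ε' ^ 2 * D) : 0 ≤ C := by
  by_contra hC
  push_neg at hC
  set ε' : ℝ := min ε (-C / (2 * D)) with hε'
  have hp : 0 < ε' := lt_min hε (div_pos (by linarith) (by linarith))
  have h1 := h ε' hp (min_le_left _ _)
  have h2 : ε' ≤ -C / (2 * D) := min_le_right _ _
  have h3 : ε' * (2 * D) ≤ -C := by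
    rw [le_div_iff₀ (by positivity)] at h2
    linarith
  nlinarith [mul_le_mul_of_nonneg_left h3 hp.le]

lemma global_of_local (f : Finset V → ℝ) (h0 : f ∅ = 0)
    (hsub : ∀ X Y : Finset V, f (X ∪ Y) + f (X ∩ Y) ≤ f X + f Y)
    (w : V → ℝ) (hw : ∀ i, 0 < w i)
    (x : V → ℝ)
    (hx1 : ∀ X : Finset V, ∑ k ∈ X, x k ≤ f X) (hx2 : ∑ k, x k = f Finset.univ)
    (hloc : ∀ i j : V, ∀ ε : ℝ, 0 < ε →
        ((∀ X : Finset V,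
            ∑ k ∈ X, (x k + ε * ((if k = i then 1 else 0) - (if k = j then 1 else 0))) ≤ f X) ∧
          ∑ k, (x k + ε * ((if k = i then 1 else 0) - (if k = j then 1 else 0))) =
            f Finset.univ) →
        ∑ k, x k ^ 2 / w k ≤
          ∑ k, (x k + ε * ((if k = i then 1 else 0) - (if k = j then 1 else 0))) ^ 2 / w k)
    (y : V → ℝ)
    (hy : (∀ X : Finset V, ∑ k ∈ X, y k ≤ f X) ∧ ∑ k, y k = f Finset.univ) :
    ∑ i, x i ^ 2 / w i ≤ ∑ i, y i ^ 2 / w i := by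
  classical
  set d : V → ℝ := fun k => x k / w k with hd_def
  -- Step 1: gradient inequality on non-separated pairs
  have hd : ∀ i j : V, i ≠ j →
      (∀ X : Finset V, (∑ k ∈ X, x k = f X) → i ∈ X → j ∈ X) →
      x j / w j ≤ x i / w i := by
    intro i j hij hsep
    obtain ⟨ε, hεpos, hfeas⟩ := exchange_feasible f x hx1 hx2 i j hij hsep
    have hD : 0 < 1 / w i + 1 / w j := by
      have hi := hw i; have hj := hw j
      positivity
    have hineq : ∀ ε' : ℝ, 0 < ε' → ε' ≤ ε →
        0 ≤ ε' * (2 * x i / w i - 2 * x j / w j) + ε' ^ 2 * (1 / w i + 1 / w j) := by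
      intro ε' hp hle
      have hfeas' := feas_mono f x hx1 hx2 i j ε ε' hp hle hfeas
      have h := hloc i j ε' hp hfeas'
      rw [g_expand w hw x i j hij ε'] at h
      linarith
    have hkey := limit_step (2 * x i / w i - 2 * x j / w j) (1 / w i + 1 / w j) ε hD hεpos hineq
    have e1 : 2 * x i / w i = 2 * (x i / w i) := by ring
    have e2 : 2 * x j / w j = 2 * (x j / w j) := by ring
    rw [e1, e2] at hkey
    linarith
  -- Step 2: level sets of d are tight
  have hlevel : ∀ t : ℝ, ∑ k ∈ Finset.univ.filter (fun k => d k ≤ t), x k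
      = f (Finset.univ.filter (fun k => d k ≤ t)) := by
    intro t
    set A := Finset.univ.filter (fun k => d k ≤ t) with hA_def
    rcases A.eq_empty_or_nonempty with hA | hA
    · rw [hA, h0]; simp
    · -- minimal tight set containing i
      have hfam : ∀ i : V, ((Finset.univ : Finset (Finset V)).filter
          (fun X => (∑ k ∈ X, x k = f X) ∧ i ∈ X)).Nonempty := by
        intro i
        exact ⟨Finset.univ, by simp [hx2]⟩
      set T : V → Finset V := fun i =>
        ((Finset.univ : Finset (Finset V)).filter
          (fun X => (∑ k ∈ X, x k = f X) ∧ i ∈ X)).inf' (hfam i) id with hT_def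
      have hT : ∀ i : V, (∑ k ∈ T i, x k = f (T i)) ∧ i ∈ T i := by
        intro i
        exact tight_inf f hsub x hx1 i _ (hfam i)
          (fun X hX => (Finset.mem_filter.mp hX).2)
      have hTsub : ∀ i : V, ∀ X : Finset V, (∑ k ∈ X, x k = f X) → i ∈ X → T i ⊆ X := by
        intro i X htX hiX
        exact Finset.inf'_le id (Finset.mem_filter.mpr ⟨Finset.mem_univ X, htX, hiX⟩)
      have hTA : ∀ i ∈ A, T i ⊆ A := by
        intro i hiA
        intro j hjT
        by_contra hjA
        have hiA' : d i ≤ t := (Finset.mem_filter.mp hiA).2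
        have hjA' : ¬ d j ≤ t := fun h => hjA (Finset.mem_filter.mpr ⟨Finset.mem_univ j, h⟩)
        have hdij : d i < d j := lt_of_le_of_lt hiA' (lt_of_not_ge hjA')
        have hij : i ≠ j := fun h => absurd (h ▸ hdij) (lt_irrefl _)
        have hnot : ¬ (∀ X : Finset V, (∑ k ∈ X, x k = f X) → i ∈ X → j ∈ X) := by
          intro hsep
          exact absurd (hd i j hij hsep) (not_le.mpr hdij)
        push_neg at hnot
        obtain ⟨X, htX, hiX, hjX⟩ := hnot
        exact hjX (hTsub i X htX hiX hjT)
      have hAeq : A.sup T = A := by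
        apply Finset.Subset.antisymm
        · exact Finset.sup_le fun i hi => Finset.le_iff_subset.mpr (hTA i hi)
        · intro i hiA
          exact Finset.mem_of_subset (Finset.le_sup hiA) (hT i).2
      have := tight_sup f hsub x hx1 A hA T (fun i _ => (hT i).1)
      rw [hAeq] at this
      exact this
  -- Step 3: apply the Abel lemma
  set z : V → ℝ := fun k => y k - x k with hz_def
  have hzsum : ∑ k, z k = 0 := by
    rw [hz_def]
    simp only [Finset.sum_sub_distrib]
    rw [hx2, hy.2]
    ring
  have hzlev : ∀ t : ℝ, ∑ k ∈ Finset.univ.filter (fun k => d k ≤ t), z k ≤ 0 := by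
    intro t
    rw [hz_def]
    simp only [Finset.sum_sub_distrib]
    have h1 := hy.1 (Finset.univ.filter (fun k => d k ≤ t))
    have h2 := hlevel t
    linarith
  have habel := abel_key (Finset.univ.image d).card d z le_rfl hzsum hzlev
  -- Step 4: convexity
  have hpt : ∀ k, y k ^ 2 / w k
      = x k ^ 2 / w k + 2 * (d k * z k) + (y k - x k) ^ 2 / w k := by
    intro k
    rw [hd_def, hz_def]
    have hwk := (hw k).ne'
    field_simp
    ring
  have hsum : ∑ k, y k ^ 2 / w k
      = ∑ k, x k ^ 2 / w k + 2 * ∑ k, d k * z k + ∑ k, (y k - x k) ^ 2 / w k := by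
    rw [Finset.sum_congr rfl (fun k _ => hpt k), Finset.sum_add_distrib,
      Finset.sum_add_distrib, Finset.mul_sum]
  have hnn : 0 ≤ ∑ k, (y k - x k) ^ 2 / w k :=
    Finset.sum_nonneg (fun k _ => div_nonneg (sq_nonneg _) (hw k).le)
  rw [hsum]
  linarith


end LocalGlobalAux

/-- Local optimality with respect to elementary exchanges is equivalent to
global optimality for minimizing the separable convex quadratic
`g(x) = ∑ i, x i ^ 2 / w i` over the base polyhedron `B(f)` of a submodular
`f` with `f ∅ = 0`. -/
theorem local_exchange_opt_iff_global_opt {V : Type*} [Fintype V] [DecidableEq V]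
    (f : Finset V → ℝ) (h0 : f ∅ = 0)
    (hsub : ∀ X Y : Finset V, f (X ∪ Y) + f (X ∩ Y) ≤ f X + f Y)
    (w : V → ℝ) (hw : ∀ i, 0 < w i)
    (x : V → ℝ)
    (hx : (∀ X : Finset V, ∑ k ∈ X, x k ≤ f X) ∧ ∑ k, x k = f Finset.univ) :
    ((∀ y : V → ℝ,
        ((∀ X : Finset V, ∑ k ∈ X, y k ≤ f X) ∧ ∑ k, y k = f Finset.univ) →
        ∑ i, x i ^ 2 / w i ≤ ∑ i, y i ^ 2 / w i)
      ↔
      (∀ i j : V, ∀ ε : ℝ, 0 < ε →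
        ((∀ X : Finset V,
            ∑ k ∈ X, (x k + ε * ((if k = i then 1 else 0) - (if k = j then 1 else 0))) ≤ f X) ∧
          ∑ k, (x k + ε * ((if k = i then 1 else 0) - (if k = j then 1 else 0))) =
            f Finset.univ) →
        ∑ k, x k ^ 2 / w k ≤
          ∑ k, (x k + ε * ((if k = i then 1 else 0) - (if k = j then 1 else 0))) ^ 2 / w k)) := by
  obtain ⟨hx1, hx2⟩ := hx
  constructor
  · intro hglob i j ε hε hfeas
    exact hglob _ hfeas
  · intro hloc y hy
    exact global_of_local f h0 hsub w hw x hx1 hx2 hloc y hy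
end

section
/- Let f be submodular with f(∅)=0, taking values in (1/K)ℤ for a positive integer K. Then if x ∈ B(f) ∩ (1/K)ℤ^V and x + ε(χ_i − χ_j) ∈ B(f) for some ε > 0 and distinct i, j ∈ V, it also holds that x + (1/K)(χ_i − χ_j) ∈ B(f) ∩ (1/K)ℤ^V. -/
/-- For a submodular `f` with `f ∅ = 0` taking values in `(1/K)ℤ`, any feasible
elementary exchange direction from a `(1/K)`-integral point of the base
polyhedron admits a step of size exactly `1/K` staying in the `(1/K)`-integral
points of the base polyhedron. -/
theorem fractional_exchange_step {V : Type*} [Fintype V] [DecidableEq V]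
    (f : Finset V → ℝ) (h0 : f ∅ = 0)
    (hsub : ∀ X Y : Finset V, f (X ∪ Y) + f (X ∩ Y) ≤ f X + f Y)
    (K : ℕ) (hK : 0 < K)
    (hfK : ∀ X : Finset V, ∃ m : ℤ, f X = m / K)
    (x : V → ℝ)
    (hx : (∀ X : Finset V, ∑ k ∈ X, x k ≤ f X) ∧ ∑ k, x k = f Finset.univ)
    (hxK : ∀ v : V, ∃ m : ℤ, x v = m / K)
    (i j : V) (hij : i ≠ j)
    (hε : ∃ ε : ℝ, 0 < ε ∧
      (∀ X : Finset V,
        ∑ k ∈ X, (x k + ε * ((if k = i then 1 else 0) - (if k = j then 1 else 0))) ≤ f X) ∧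
      ∑ k, (x k + ε * ((if k = i then 1 else 0) - (if k = j then 1 else 0))) = f Finset.univ) :
    ((∀ X : Finset V,
        ∑ k ∈ X, (x k + (1 / K) * ((if k = i then 1 else 0) - (if k = j then 1 else 0))) ≤ f X) ∧
      ∑ k, (x k + (1 / K) * ((if k = i then 1 else 0) - (if k = j then 1 else 0))) =
        f Finset.univ) ∧
    (∀ v : V, ∃ m : ℤ,
      x v + (1 / K) * ((if v = i then 1 else 0) - (if v = j then 1 else 0)) = m / K) := by
  obtain ⟨ε, hε0, hεle, hεeq⟩ := hε
  have hKpos : (0:ℝ) < K := by exact_mod_cast hK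
  choose mx hmx using hxK
  have hsum : ∀ (c : ℝ) (X : Finset V),
      ∑ k ∈ X, (x k + c * ((if k = i then 1 else 0) - (if k = j then 1 else 0)))
        = ∑ k ∈ X, x k + c * ((if i ∈ X then 1 else 0) - (if j ∈ X then 1 else 0)) := by
    intro c X
    rw [Finset.sum_add_distrib, ← Finset.mul_sum]
    congr 1
    rw [Finset.sum_sub_distrib]
    simp [Finset.sum_ite_eq']
  have hxint : ∀ X : Finset V, ∑ k ∈ X, x k = (∑ k ∈ X, mx k : ℤ) / K := by
    intro X
    push_cast
    rw [Finset.sum_div]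
    exact Finset.sum_congr rfl fun k _ => hmx k
  refine ⟨⟨fun X => ?_, ?_⟩, fun v => ?_⟩
  · rw [hsum]
    by_cases hi : i ∈ X <;> by_cases hj : j ∈ X
    · simp only [hi, hj, if_pos]
      simpa using hx.1 X
    · -- hard case
      rw [if_pos hi, if_neg hj]
      have hlt : ∑ k ∈ X, x k < f X := by
        have := hεle X
        rw [hsum] at this
        rw [if_pos hi, if_neg hj] at this
        linarith
      obtain ⟨m, hm⟩ := hfK X
      rw [hxint X, hm] at hlt ⊢
      have hmlt : (∑ k ∈ X, mx k : ℤ) < m := by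
        have := (div_lt_div_iff_of_pos_right hKpos).mp hlt
        exact_mod_cast this
      have h1 : ((∑ k ∈ X, mx k : ℤ) : ℝ) + 1 ≤ (m : ℝ) := by exact_mod_cast hmlt
      have h2 : (((∑ k ∈ X, mx k : ℤ) : ℝ) + 1) / K ≤ (m : ℝ) / K := by gcongr
      rw [add_div] at h2
      linarith
    · rw [if_neg hi, if_pos hj]
      have := hx.1 X
      have h1 : (0:ℝ) ≤ 1 / K := by positivity
      nlinarith
    · rw [if_neg hi, if_neg hj]
      have := hx.1 X
      nlinarith
  · rw [hsum]
    simp [hx.2]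
  · by_cases hvi : v = i
    · refine ⟨mx v + 1, ?_⟩
      subst hvi
      rw [hmx v]
      simp only [if_pos rfl, if_neg hij]
      push_cast
      field_simp
      ring
    · by_cases hvj : v = j
      · refine ⟨mx v - 1, ?_⟩
        subst hvj
        rw [hmx v]
        simp only [if_neg hvi, if_pos rfl]
        push_cast
        field_simp
        ring
      · exact ⟨mx v, by rw [hmx v]; simp [hvi, hvj]⟩
end

section
/- Let f be submodular with f(∅)=0 and suppose P is a partition of V such that f(X) = ∑_{C∈P} f(X∩C) for all X ⊆ V. Then for any x ∈ B(f) and any i ∈ V, the set dep(x,i) (the minimal minimizer of min{f(X) − x(X) : i ∈ X ⊆ V}) is contained in the block C ∈ P with i ∈ C. -/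
/-!
Since `f` splits along `P` and `x ≤ f` on every set, each block `C' ≠ C` contributes
`f (X ∩ C') - x (X ∩ C') ≥ 0` to `f X - x X`. Cutting a minimizer `X` down to `X ∩ C`, where `C`
is the block of `i`, therefore gives another minimizer, and `dep x i` lies inside every minimizer.
-/

attribute [local instance] Classical.propDecidable

namespace Finset

theorem sum_eq_sum_sum_inter_of_partition {α β : Type*} [DecidableEq α] [AddCommMonoid β]
    {P : Finset (Finset α)} (hdisj : ∀ C ∈ P, ∀ C' ∈ P, C ≠ C' → Disjoint C C')
    (hcover : ∀ a : α, ∃ C ∈ P, a ∈ C) (g : α → β) (X : Finset α) :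
    ∑ a ∈ X, g a = ∑ C ∈ P, ∑ a ∈ X ∩ C, g a := by
  have hX : X = P.biUnion (X ∩ ·) := by
    ext a
    obtain ⟨C, hC, haC⟩ := hcover a
    simp only [mem_biUnion, mem_inter]
    exact ⟨fun ha => ⟨C, hC, ha, haC⟩, fun ⟨_, _, ha, _⟩ => ha⟩
  conv_lhs => rw [hX]
  refine sum_biUnion fun C hC C' hC' hne => ?_
  exact (hdisj C hC C' hC' hne).mono inter_subset_right inter_subset_right

end Finset

theorem sub_sum_inter_block_le {V : Type*} [DecidableEq V] {f : Finset V → ℝ} {x : V → ℝ}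
    {P : Finset (Finset V)}
    (hdisj : ∀ C ∈ P, ∀ C' ∈ P, C ≠ C' → Disjoint C C')
    (hcover : ∀ i : V, ∃ C ∈ P, i ∈ C)
    (hdec : ∀ X : Finset V, f X = ∑ C ∈ P, f (X ∩ C))
    (hx : ∀ X : Finset V, ∑ k ∈ X, x k ≤ f X) {C : Finset V} (hC : C ∈ P) (Y : Finset V) :
    f (Y ∩ C) - ∑ k ∈ Y ∩ C, x k ≤ f Y - ∑ k ∈ Y, x k := by
  have hf := hdec Y
  have hsum := Finset.sum_eq_sum_sum_inter_of_partition hdisj hcover x Y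
  rw [← Finset.add_sum_erase P _ hC] at hf hsum
  have hrest : ∑ C' ∈ P.erase C, ∑ k ∈ Y ∩ C', x k ≤ ∑ C' ∈ P.erase C, f (Y ∩ C') :=
    Finset.sum_le_sum fun C' _ => hx (Y ∩ C')
  linarith

section Minimizers

variable {V : Type*} [Fintype V] [DecidableEq V]

theorem exists_isMinimizerAt (f : Finset V → ℝ) (x : V → ℝ) (i : V) :
    ∃ X, IsMinimizerAt f x i X := by
  obtain ⟨X, hX, hmin⟩ := Finset.exists_min_image ({Y : Finset V | i ∈ Y} : Finset _)
    (fun Y => f Y - ∑ k ∈ Y, x k) ⟨Finset.univ, by simp⟩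
  exact ⟨X, (Finset.mem_filter.mp hX).2, fun Y hY => hmin Y (by simpa using hY)⟩

theorem dep_subset_of_isMinimizerAt {f : Finset V → ℝ} {x : V → ℝ} {i : V} {X : Finset V} (hX : IsMinimizerAt f x i X) :
    dep f x i ⊆ X :=
  fun _ hv => (Finset.mem_filter.mp hv).2 X hX

end Minimizers

theorem dep_subset_block_general {V : Type*} [Fintype V] [DecidableEq V]
    (f : Finset V → ℝ) (P : Finset (Finset V))
    (hdisj : ∀ C ∈ P, ∀ C' ∈ P, C ≠ C' → Disjoint C C')
    (hcover : ∀ i : V, ∃ C ∈ P, i ∈ C)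
    (hdec : ∀ X : Finset V, f X = ∑ C ∈ P, f (X ∩ C))
    (x : V → ℝ)
    (hx : (∀ X : Finset V, ∑ k ∈ X, x k ≤ f X) ∧ ∑ k, x k = f Finset.univ) :
    ∀ (i : V) (C : Finset V), C ∈ P → i ∈ C → dep f x i ⊆ C := by
  intro i C hC hiC
  obtain ⟨X, hiX, hXmin⟩ := exists_isMinimizerAt f x i
  have hXC : IsMinimizerAt f x i (X ∩ C) :=
    ⟨Finset.mem_inter.mpr ⟨hiX, hiC⟩, fun Y hY =>
      (sub_sum_inter_block_le hdisj hcover hdec hx.1 hC X).trans (hXmin Y hY)⟩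
  exact (dep_subset_of_isMinimizerAt hXC).trans Finset.inter_subset_right

/-- If a submodular `f` with `f ∅ = 0` decomposes additively across a partition
`P` of `V`, then for any `x ∈ B(f)` and any `i`, the set `dep(x, i)` is
contained in the block of `P` containing `i`. -/
theorem dep_subset_block {V : Type*} [Fintype V] [DecidableEq V]
    (f : Finset V → ℝ) (P : Finset (Finset V))
    (h0 : f ∅ = 0)
    (hsub : ∀ X Y : Finset V, f (X ∪ Y) + f (X ∩ Y) ≤ f X + f Y)
    (hne : ∀ C ∈ P, C.Nonempty)
    (hdisj : ∀ C ∈ P, ∀ C' ∈ P, C ≠ C' → Disjoint C C')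
    (hcover : ∀ i : V, ∃ C ∈ P, i ∈ C)
    (hdec : ∀ X : Finset V, f X = ∑ C ∈ P, f (X ∩ C))
    (x : V → ℝ)
    (hx : (∀ X : Finset V, ∑ k ∈ X, x k ≤ f X) ∧ ∑ k, x k = f Finset.univ) :
    ∀ (i : V) (C : Finset V), C ∈ P → i ∈ C → dep f x i ⊆ C :=
  dep_subset_block_general f P hdisj hcover hdec x hx
end
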